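/- arXiv:2002.01306 — 12 statements merged into one kernel-verified Lean document; each statement's English description precedes it below -/
import Mathlib

section
/- Let d be a positive integer, 0 ≤ r < 1, and n a positive integer. If X_1, …, X_n and Y are drawn independently from the uniform distribution on the spherical layer B_d \ rB_d, then the probability that Y does not belong to the convex hull of {X_1, …, X_n} is greater than 1 − n/2^d. Equivalently, with respect to the (n+1)-fold product of the uniform probability measure on B_d \ rB_d, the set of tuples (X_1, …, X_n, Y) with Y ∈ conv(X_1, …, X_n) has measure less than n/2^d. -/
/-! If `Y ∈ conv(X_1, …, X_n)` then `‖Y‖² ≤ ⟪X_i, Y⟫` for some `i`, since otherwise the open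
half-space `{z | ⟪z, Y⟫ < ‖Y‖²}` would contain every `X_i` but not `Y`. The set of such `Y` is
the ball with diameter `[0, X_i]`; it contains a ball of radius `r/2` lying inside `rB_d`, so its
part in the layer has volume at most `(‖X_i‖^d - r^d) / 2^d` times that of the unit ball.
Integrating in `X_i` with the polar-coordinate formula, the probability that `‖Y‖² ≤ ⟪X_i, Y⟫`
is at most `2^{-(d+1)}`, and the union bound over `i` gives `n / 2^{d+1} < n / 2^d`. -/

open MeasureTheory Measure Metric ENNReal Set Module ProbabilityTheory

local notation "dim" => Module.finrank ℝ

theorem hasDerivAt_sq_pow_sub_div (d : ℕ) (hd : d ≠ 0) (a y : ℝ) :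
    HasDerivAt (fun t : ℝ ↦ (t ^ d - a) ^ 2 / (2 * d)) (y ^ (d - 1) * (y ^ d - a)) y := by
  refine ((((hasDerivAt_pow d y).sub_const a).pow 2).div_const (2 * d : ℝ)).congr_deriv ?_
  have : (d : ℝ) ≠ 0 := by exact_mod_cast hd
  field_simp
  push_cast
  ring

section InnerProductSpace

variable {E : Type*} [NormedAddCommGroup E] [InnerProductSpace ℝ E]

theorem setOf_norm_sq_le_inner_eq_closedBall (x : E) :
    {y : E | ‖y‖ ^ 2 ≤ inner ℝ x y} = closedBall ((2 : ℝ)⁻¹ • x) ‖(2 : ℝ)⁻¹ • x‖ := by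
  ext y
  have key : ‖y - (2 : ℝ)⁻¹ • x‖ ^ 2 = ‖y‖ ^ 2 - inner ℝ x y + ‖(2 : ℝ)⁻¹ • x‖ ^ 2 := by
    rw [norm_sub_sq_real, real_inner_smul_right, real_inner_comm]
    ring
  rw [mem_ofPred_eq, mem_closedBall, dist_eq_norm, ← sq_le_sq₀ (norm_nonneg _) (norm_nonneg _), key]
  constructor <;> intro h <;> linarith

theorem exists_norm_sq_le_inner_of_mem_convexHull {ι : Type*} {x : ι → E} {y : E}
    (hy : y ∈ convexHull ℝ (range x)) : ∃ i, ‖y‖ ^ 2 ≤ inner ℝ (x i) y := by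
  by_contra! h
  have hsub : convexHull ℝ (range x) ⊆ {z | inner ℝ z y < ‖y‖ ^ 2} :=
    convexHull_min (range_subset_iff.2 h) (convex_halfSpace_lt (innerₛₗ ℝ |>.flip y).isLinear _)
  simpa [real_inner_self_eq_norm_sq] using hsub hy

end InnerProductSpace

section NormedSpace

variable {E : Type*} [NormedAddCommGroup E] [NormedSpace ℝ E]

theorem closedBall_subset_closedBall_norm_inter_closedBall {c : E} {ρ : ℝ} (hρ : 0 ≤ ρ)
    (hρc : ρ < ‖c‖) :
    closedBall ((ρ / ‖c‖) • c) ρ ⊆ closedBall c ‖c‖ ∩ closedBall 0 (2 * ρ) := by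
  have hc : 0 < ‖c‖ := hρ.trans_lt hρc
  have hsmul : ‖(ρ / ‖c‖) • c‖ = ρ := by
    rw [norm_smul, Real.norm_of_nonneg (by positivity), div_mul_cancel₀ _ hc.ne']
  refine subset_inter (closedBall_subset_closedBall' ?_) (closedBall_subset_closedBall' ?_)
  · have hdiff : c - (ρ / ‖c‖) • c = (1 - ρ / ‖c‖) • c := by rw [sub_smul, one_smul]
    have hcoef : 0 ≤ 1 - ρ / ‖c‖ := sub_nonneg.2 ((div_le_one hc).2 hρc.le)
    rw [dist_comm, dist_eq_norm, hdiff, norm_smul, Real.norm_of_nonneg hcoef, sub_mul, one_mul,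
      div_mul_cancel₀ _ hc.ne']
    linarith
  · rw [dist_zero_right, hsmul]; linarith

variable [MeasurableSpace E] [BorelSpace E] [FiniteDimensional ℝ E] (μ : Measure E)
  [μ.IsAddHaarMeasure]

theorem addHaar_closedBall_diff_closedBall {c c' : E} {s s' : ℝ} (hs : 0 ≤ s) (hs' : 0 ≤ s')
    (h : closedBall c' s' ⊆ closedBall c s) :
    μ (closedBall c s \ closedBall c' s') =
      ENNReal.ofReal (s ^ dim E - s' ^ dim E) * μ (ball 0 1) := by
  rw [measure_sdiff h measurableSet_closedBall.nullMeasurableSet measure_closedBall_lt_top.ne,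
    addHaar_closedBall μ _ hs, addHaar_closedBall μ _ hs', ENNReal.ofReal_sub _ (by positivity),
    ENNReal.sub_mul fun _ _ ↦ measure_ball_lt_top.ne]

theorem addHaar_closedBall_norm_diff_closedBall_le (c : E) {ρ : ℝ} (hρ : 0 ≤ ρ) :
    μ (closedBall c ‖c‖ \ closedBall 0 (2 * ρ)) ≤
      ENNReal.ofReal (‖c‖ ^ dim E - ρ ^ dim E) * μ (ball 0 1) := by
  rcases le_or_gt ‖c‖ ρ with hcρ | hρc
  · have : closedBall c ‖c‖ ⊆ closedBall 0 (2 * ρ) :=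
      closedBall_subset_closedBall' (by rw [dist_zero_right]; linarith)
    simp [sdiff_eq_empty.2 this]
  obtain ⟨hsub, hsub₀⟩ :=
    subset_inter_iff.1 (closedBall_subset_closedBall_norm_inter_closedBall hρ hρc)
  calc μ (closedBall c ‖c‖ \ closedBall 0 (2 * ρ))
      ≤ μ (closedBall c ‖c‖ \ closedBall ((ρ / ‖c‖) • c) ρ) :=
        measure_mono (sdiff_subset_sdiff_right hsub₀)
    _ = _ := addHaar_closedBall_diff_closedBall μ (norm_nonneg c) hρ hsub

theorem setIntegral_closedBall_diff_closedBall_norm_pow_sub [Nontrivial E] {r R : ℝ}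
    (hr : 0 ≤ r) (hrR : r ≤ R) :
    ∫ x in closedBall (0 : E) R \ closedBall 0 r, (‖x‖ ^ dim E - r ^ dim E) ∂μ =
      μ.real (ball 0 1) * (R ^ dim E - r ^ dim E) ^ 2 / 2 := by
  have hindicator : (closedBall (0 : E) R \ closedBall 0 r).indicator (‖·‖ ^ dim E - r ^ dim E) =
      fun x ↦ (Ioc r R).indicator (· ^ dim E - r ^ dim E) ‖x‖ := by
    ext x
    simp [indicator, and_comm]
  have hradial :
      ∫ y in Ioi (0 : ℝ), y ^ (dim E - 1) • (Ioc r R).indicator (· ^ dim E - r ^ dim E) y =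
        ∫ y in r..R, y ^ (dim E - 1) * (y ^ dim E - r ^ dim E) := by
    have : (fun y : ℝ ↦ y ^ (dim E - 1) • (Ioc r R).indicator (· ^ dim E - r ^ dim E) y) =
        (Ioc r R).indicator fun y ↦ y ^ (dim E - 1) * (y ^ dim E - r ^ dim E) :=
      funext fun y ↦ (indicator_mul_right _ (· ^ (dim E - 1)) _).symm
    rw [this, setIntegral_indicator measurableSet_Ioc,
      inter_eq_right.2 (Ioc_subset_Ioi_self.trans (Ioi_subset_Ioi hr)),
      intervalIntegral.integral_of_le hrR]
  rw [← integral_indicator (measurableSet_closedBall.diff measurableSet_closedBall), hindicator,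
    integral_fun_norm_addHaar, hradial, intervalIntegral.integral_eq_sub_of_hasDerivAt
      (fun y _ ↦ hasDerivAt_sq_pow_sub_div _ finrank_pos.ne' _ y)
      ((by fun_prop : Continuous _).intervalIntegrable _ _)]
  have : (dim E : ℝ) ≠ 0 := by exact_mod_cast finrank_pos.ne'
  simp only [sub_self, zero_pow two_ne_zero, zero_div, sub_zero, nsmul_eq_mul, smul_eq_mul]
  field_simp

end NormedSpace

def sphericalLayer {E : Type*} [NormedAddCommGroup E] (r : ℝ) : Set E :=
  closedBall 0 1 \ closedBall 0 r

section SphericalLayer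

variable {E : Type*} [NormedAddCommGroup E]

theorem measurableSet_sphericalLayer [MeasurableSpace E] [OpensMeasurableSpace E] (r : ℝ) :
    MeasurableSet (sphericalLayer r : Set E) :=
  measurableSet_closedBall.diff measurableSet_closedBall

theorem lt_norm_of_mem_sphericalLayer {r : ℝ} {x : E} (hx : x ∈ sphericalLayer r) : r < ‖x‖ := by
  simpa using hx.2

variable [NormedSpace ℝ E] [MeasurableSpace E] [BorelSpace E] [FiniteDimensional ℝ E]
  (μ : Measure E) [μ.IsAddHaarMeasure] {r : ℝ}

theorem addHaar_sphericalLayer (hr0 : 0 ≤ r) (hr1 : r ≤ 1) :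
    μ (sphericalLayer r) = ENNReal.ofReal (1 - r ^ dim E) * μ (ball 0 1) := by
  rw [sphericalLayer, addHaar_closedBall_diff_closedBall μ zero_le_one hr0
    (closedBall_subset_closedBall hr1), one_pow]

variable [Nontrivial E]

theorem addHaar_sphericalLayer_pos (hr0 : 0 ≤ r) (hr1 : r < 1) :
    0 < μ (sphericalLayer r) := by
  rw [addHaar_sphericalLayer μ hr0 hr1.le]
  exact ENNReal.mul_pos (ENNReal.ofReal_pos.2 (sub_pos.2 (pow_lt_one₀ hr0 hr1 finrank_pos.ne'))).ne'
    (measure_ball_pos μ 0 one_pos).ne'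

theorem isProbabilityMeasure_cond_sphericalLayer (hr0 : 0 ≤ r) (hr1 : r < 1) :
    IsProbabilityMeasure μ[|sphericalLayer r] :=
  cond_isProbabilityMeasure_of_finite (addHaar_sphericalLayer_pos μ hr0 hr1).ne'
    (measure_mono sdiff_subset |>.trans_lt measure_closedBall_lt_top).ne

end SphericalLayer

section UniformOnSphericalLayer

variable {E : Type*} [NormedAddCommGroup E] [InnerProductSpace ℝ E] [MeasurableSpace E]
  [BorelSpace E] [FiniteDimensional ℝ E] [Nontrivial E] (μ : Measure E) [μ.IsAddHaarMeasure]
  {r : ℝ}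

theorem cond_sphericalLayer_setOf_norm_sq_le_inner_le (hr0 : 0 ≤ r) (hr1 : r < 1) (x : E) :
    μ[|sphericalLayer r] {y | ‖y‖ ^ 2 ≤ inner ℝ x y} ≤
      ENNReal.ofReal ((‖x‖ ^ dim E - r ^ dim E) / (2 ^ dim E * (1 - r ^ dim E))) := by
  have hκ : 0 < 1 - r ^ dim E := sub_pos.2 (pow_lt_one₀ hr0 hr1 finrank_pos.ne')
  have hcap : ‖(2 : ℝ)⁻¹ • x‖ ^ dim E - (r / 2) ^ dim E =
      (‖x‖ ^ dim E - r ^ dim E) / 2 ^ dim E := by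
    rw [norm_smul, Real.norm_of_nonneg (by norm_num), mul_pow, div_pow, inv_pow]
    ring
  rw [setOf_norm_sq_le_inner_eq_closedBall, cond_apply (measurableSet_sphericalLayer r),
    addHaar_sphericalLayer μ hr0 hr1.le]
  calc (ENNReal.ofReal (1 - r ^ dim E) * μ (ball 0 1))⁻¹ *
        μ (sphericalLayer r ∩ closedBall ((2 : ℝ)⁻¹ • x) ‖(2 : ℝ)⁻¹ • x‖)
      ≤ (ENNReal.ofReal (1 - r ^ dim E) * μ (ball 0 1))⁻¹ *
        (ENNReal.ofReal ((‖x‖ ^ dim E - r ^ dim E) / 2 ^ dim E) * μ (ball 0 1)) := by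
        gcongr
        calc μ (sphericalLayer r ∩ closedBall ((2 : ℝ)⁻¹ • x) ‖(2 : ℝ)⁻¹ • x‖)
            ≤ μ (closedBall ((2 : ℝ)⁻¹ • x) ‖(2 : ℝ)⁻¹ • x‖ \ closedBall 0 (2 * (r / 2))) := by
              rw [mul_div_cancel₀ r two_ne_zero]
              exact measure_mono fun y hy ↦ ⟨hy.2, hy.1.2⟩
          _ ≤ _ := addHaar_closedBall_norm_diff_closedBall_le μ _ (by positivity)
          _ = _ := by rw [hcap]
    _ = _ := by
        have hV₀ : μ (ball (0 : E) 1) ≠ 0 := (measure_ball_pos μ 0 one_pos).ne'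
        have hV : μ (ball (0 : E) 1) ≠ ⊤ := measure_ball_lt_top.ne
        rw [ENNReal.mul_inv (Or.inr hV) (Or.inl ENNReal.ofReal_ne_top), mul_comm (ENNReal.ofReal _),
          mul_assoc, ← mul_assoc (μ (ball 0 1))⁻¹, ENNReal.inv_mul_cancel hV₀ hV, one_mul,
          ← div_div, ENNReal.ofReal_div_of_pos hκ, ENNReal.div_eq_inv_mul]

theorem integral_cond_sphericalLayer (hr0 : 0 ≤ r) (hr1 : r < 1) :
    ∫ x, (‖x‖ ^ dim E - r ^ dim E) / (2 ^ dim E * (1 - r ^ dim E)) ∂μ[|sphericalLayer r] =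
      (2 ^ (dim E + 1))⁻¹ := by
  have hκ : 0 < 1 - r ^ dim E := sub_pos.2 (pow_lt_one₀ hr0 hr1 finrank_pos.ne')
  have hV : 0 < μ.real (ball 0 1) :=
    ENNReal.toReal_pos (measure_ball_pos μ 0 one_pos).ne' measure_ball_lt_top.ne
  rw [integral_div, ProbabilityTheory.cond, integral_smul_measure, sphericalLayer,
    setIntegral_closedBall_diff_closedBall_norm_pow_sub μ hr0 hr1.le, ← sphericalLayer,
    ENNReal.toReal_inv, addHaar_sphericalLayer μ hr0 hr1.le, ENNReal.toReal_mul,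
    ENNReal.toReal_ofReal hκ.le, ← measureReal_def, one_pow, smul_eq_mul]
  field_simp
  ring

theorem prod_cond_sphericalLayer_setOf_norm_sq_le_inner_le (hr0 : 0 ≤ r) (hr1 : r < 1) :
    (μ[|sphericalLayer r].prod μ[|sphericalLayer r]) {p : E × E | ‖p.2‖ ^ 2 ≤ inner ℝ p.1 p.2} ≤
      (2 ^ (dim E + 1))⁻¹ := by
  set ν := μ[|sphericalLayer r]
  set g : E → ℝ := fun x ↦ (‖x‖ ^ dim E - r ^ dim E) / (2 ^ dim E * (1 - r ^ dim E))
  have hmeas : MeasurableSet {p : E × E | ‖p.2‖ ^ 2 ≤ inner ℝ p.1 p.2} :=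
    measurableSet_le (by fun_prop) (by fun_prop)
  have hint : Integrable g ν :=
    ((by fun_prop : Continuous g).continuousOn.integrableOn_compact
      (isCompact_closedBall 0 1)).mono_set sdiff_subset |>.smul_measure
        (ENNReal.inv_ne_top.2 (addHaar_sphericalLayer_pos μ hr0 hr1).ne')
  have hg : 0 ≤ᵐ[ν] g := (ae_cond_mem (measurableSet_sphericalLayer r)).mono fun x hx ↦
    div_nonneg (sub_nonneg.2 (pow_le_pow_left₀ hr0 (lt_norm_of_mem_sphericalLayer hx).le _))
      (mul_nonneg (by positivity) (sub_nonneg.2 (pow_le_one₀ hr0 hr1.le)))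
  calc (ν.prod ν) {p : E × E | ‖p.2‖ ^ 2 ≤ inner ℝ p.1 p.2}
      = ∫⁻ x, ν {y | ‖y‖ ^ 2 ≤ inner ℝ x y} ∂ν := Measure.prod_apply hmeas
    _ ≤ ∫⁻ x, ENNReal.ofReal (g x) ∂ν :=
        lintegral_mono fun x ↦ cond_sphericalLayer_setOf_norm_sq_le_inner_le μ hr0 hr1 x
    _ = ENNReal.ofReal (∫ x, g x ∂ν) := (ofReal_integral_eq_lintegral_ofReal hint hg).symm
    _ = (2 ^ (dim E + 1))⁻¹ := by
        rw [integral_cond_sphericalLayer μ hr0 hr1, ENNReal.ofReal_inv_of_pos (by positivity),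
          ENNReal.ofReal_pow zero_le_two, ENNReal.ofReal_ofNat]

end UniformOnSphericalLayer

theorem measurePreserving_eval_prod_eval {ι α : Type*} [Fintype ι] [MeasurableSpace α]
    (ν : Measure α) [IsProbabilityMeasure ν] {i j : ι} (hij : i ≠ j) :
    MeasurePreserving (fun X : ι → α ↦ (X i, X j)) (Measure.pi fun _ ↦ ν) (ν.prod ν) := by
  have hindep : IndepFun (fun X : ι → α ↦ X i) (fun X ↦ X j) (Measure.pi fun _ ↦ ν) :=
    (iIndepFun_pi (μ := fun _ : ι ↦ ν) (X := fun _ ↦ id) fun _ ↦ aemeasurable_id).indepFun hij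
  refine ⟨by fun_prop, ?_⟩
  rw [hindep.map_prod_eq_prod_map_map (measurable_pi_apply i).aemeasurable
    (measurable_pi_apply j).aemeasurable,
    (measurePreserving_eval _ i).map_eq, (measurePreserving_eval _ j).map_eq]

theorem one_sub_probReal_le_probReal_compl {α : Type*} [MeasurableSpace α] (P : Measure α)
    [IsProbabilityMeasure P] (s : Set α) : 1 - P.real s ≤ P.real sᶜ := by
  have := measureReal_union_le (μ := P) s sᶜ
  rw [union_compl_self, probReal_univ] at this
  linarith

theorem pi_setOf_last_mem_convexHull_le {E : Type*} [NormedAddCommGroup E]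
    [InnerProductSpace ℝ E] [MeasurableSpace E] (ν : Measure E) [IsProbabilityMeasure ν]
    (n : ℕ) :
    (Measure.pi fun _ : Fin (n + 1) ↦ ν)
        {X | X (Fin.last n) ∈ convexHull ℝ (range fun i : Fin n ↦ X i.castSucc)} ≤
      n * (ν.prod ν) {p : E × E | ‖p.2‖ ^ 2 ≤ inner ℝ p.1 p.2} := by
  set P := Measure.pi fun _ : Fin (n + 1) ↦ ν
  set B := {p : E × E | ‖p.2‖ ^ 2 ≤ inner ℝ p.1 p.2}
  calc P {X | X (Fin.last n) ∈ convexHull ℝ (range fun i : Fin n ↦ X i.castSucc)}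
      ≤ P (⋃ i : Fin n, (fun X ↦ (X i.castSucc, X (Fin.last n))) ⁻¹' B) :=
        measure_mono fun X hX ↦ mem_iUnion.2 (exists_norm_sq_le_inner_of_mem_convexHull hX)
    _ ≤ ∑ i : Fin n, P ((fun X ↦ (X i.castSucc, X (Fin.last n))) ⁻¹' B) :=
        measure_iUnion_fintype_le _ _
    _ ≤ ∑ _ : Fin n, (ν.prod ν) B := Finset.sum_le_sum fun i _ ↦
        (measurePreserving_eval_prod_eval ν (Fin.castSucc_lt_last i).ne).measure_preimage_le B
    _ = n * (ν.prod ν) B := by simp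

/-- **Theorem 1 (Sidorov–Zolotykh).** For a random point `Y` and random points
`X_1, …, X_n` drawn independently and uniformly from the spherical layer
`B_d \ rB_d` (`0 ≤ r < 1`), the probability that `Y` is linearly separable from
`{X_1, …, X_n}` (i.e. `Y ∉ conv(X_1, …, X_n)`) is greater than `1 - n / 2^d`;
equivalently, the set of tuples with `Y ∈ conv(X_1, …, X_n)` has probability
less than `n / 2^d`. -/
theorem random_point_linearly_separable_from_random_set
    (d : ℕ) (hd : 0 < d) (n : ℕ) (hn : 0 < n) (r : ℝ) (hr0 : 0 ≤ r) (hr1 : r < 1) :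
    ∀ μ : Measure (EuclideanSpace ℝ (Fin d)),
      μ = (volume (closedBall (0 : EuclideanSpace ℝ (Fin d)) 1 \ closedBall 0 r))⁻¹ •
        volume.restrict (closedBall (0 : EuclideanSpace ℝ (Fin d)) 1 \ closedBall 0 r) →
      (1 - (n : ℝ) / 2 ^ d <
          ((Measure.pi fun _ : Fin (n + 1) => μ)
            {X | X (Fin.last n) ∉
              convexHull ℝ (Set.range fun i : Fin n => X i.castSucc)}).toReal
        ∧ (Measure.pi fun _ : Fin (n + 1) => μ)
            {X | X (Fin.last n) ∈
              convexHull ℝ (Set.range fun i : Fin n => X i.castSucc)}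
            < (n : ℝ≥0∞) / 2 ^ d) := by
  intro μ hμ
  replace hμ : μ = volume[|sphericalLayer r] := hμ
  have : Nontrivial (EuclideanSpace ℝ (Fin d)) :=
    Module.nontrivial_of_finrank_pos (by rwa [finrank_euclideanSpace_fin])
  have : IsProbabilityMeasure μ := by
    rw [hμ]; exact isProbabilityMeasure_cond_sphericalLayer volume hr0 hr1
  set P := Measure.pi fun _ : Fin (n + 1) ↦ μ
  set A := {X : Fin (n + 1) → EuclideanSpace ℝ (Fin d) |
    X (Fin.last n) ∈ convexHull ℝ (Set.range fun i : Fin n ↦ X i.castSucc)}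
  have hA : P A < n / 2 ^ d := calc
    P A ≤ n * (μ.prod μ) {p | ‖p.2‖ ^ 2 ≤ inner ℝ p.1 p.2} := pi_setOf_last_mem_convexHull_le μ n
    _ ≤ n * (2 ^ (d + 1))⁻¹ := by
      have := prod_cond_sphericalLayer_setOf_norm_sq_le_inner_le
        (E := EuclideanSpace ℝ (Fin d)) volume hr0 hr1
      rw [finrank_euclideanSpace_fin, ← hμ] at this
      gcongr
    _ < n / 2 ^ d := by
      rw [ENNReal.div_eq_inv_mul, mul_comm]
      refine ENNReal.mul_lt_mul_left (by exact_mod_cast hn.ne') (natCast_ne_top n)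
        (ENNReal.inv_lt_inv.2 ?_)
      exact_mod_cast Nat.pow_lt_pow_succ one_lt_two
  refine ⟨?_, hA⟩
  have hA' : P.real A < n / 2 ^ d := by
    refine ENNReal.toReal_lt_of_lt_ofReal (hA.trans_eq ?_)
    rw [ENNReal.ofReal_div_of_pos (by positivity), ENNReal.ofReal_natCast,
      ENNReal.ofReal_pow zero_le_two, ENNReal.ofReal_ofNat]
  show 1 - _ < P.real Aᶜ
  linarith [one_sub_probReal_le_probReal_compl P A]
end

section
/- Let d be a positive integer, 0 ≤ r < 1, 0 < ϑ < 1, and n a positive integer with n < ϑ·2^d. If X_1, …, X_n and Y are drawn independently from the uniform distribution on the spherical layer B_d \ rB_d, then the probability that Y does not belong to the convex hull of {X_1, …, X_n} is greater than 1 − ϑ. -/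
open MeasureTheory Metric ENNReal

section Aux

variable {d : ℕ}

/-- The key algebraic equivalence: `‖x - 2y‖ ≤ ‖x‖ ↔ ‖y‖² ≤ ⟪x, y⟫`. -/
lemma norm_sub_two_smul_le_iff (x y : EuclideanSpace ℝ (Fin d)) :
    ‖x - (2:ℝ) • y‖ ≤ ‖x‖ ↔ ‖y‖ ^ 2 ≤ (inner ℝ x y : ℝ) := by
  have hsq : ‖x - (2:ℝ) • y‖ ^ 2 = ‖x‖ ^ 2 - 4 * (inner ℝ x y : ℝ) + 4 * ‖y‖ ^ 2 := by
    rw [norm_sub_sq_real, real_inner_smul_right, norm_smul]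
    simp [Real.norm_eq_abs]
    ring
  constructor
  · intro h
    have h2 : ‖x - (2:ℝ) • y‖ ^ 2 ≤ ‖x‖ ^ 2 := by
      exact pow_le_pow_left₀ (norm_nonneg _) h 2
    nlinarith
  · intro h
    have h2 : ‖x - (2:ℝ) • y‖ ^ 2 ≤ ‖x‖ ^ 2 := by nlinarith
    have := Real.sqrt_le_sqrt h2
    rwa [Real.sqrt_sq (norm_nonneg _), Real.sqrt_sq (norm_nonneg _)] at this

/-- If `Y` is in the convex hull of the range of `f`, then some `f i` satisfies
`⟪f i, Y⟫ ≥ ‖Y‖²`. -/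
lemma exists_inner_ge {n : ℕ} (hn : 0 < n) (f : Fin n → EuclideanSpace ℝ (Fin d))
    (Y : EuclideanSpace ℝ (Fin d)) (hY : Y ∈ convexHull ℝ (Set.range f)) :
    ∃ i, ‖Y‖ ^ 2 ≤ (inner ℝ (f i) Y : ℝ) := by
  classical
  set t : Finset (EuclideanSpace ℝ (Fin d)) := Finset.image f Finset.univ with ht
  have hrange : Set.range f = ↑t := by
    simp [ht]
  rw [hrange, Finset.mem_convexHull'] at hY
  obtain ⟨w, hw0, hw1, hwY⟩ := hY
  have htne : t.Nonempty := ⟨f ⟨0, hn⟩, by simp [ht]⟩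
  obtain ⟨z₀, hz₀t, hz₀⟩ := t.exists_max_image (fun z => (inner ℝ z Y : ℝ)) htne
  have key : ‖Y‖ ^ 2 ≤ (inner ℝ z₀ Y : ℝ) := by
    have hYY : (inner ℝ Y Y : ℝ) = ∑ z ∈ t, w z * (inner ℝ z Y : ℝ) := by
      rw [← hwY, sum_inner]
      exact Finset.sum_congr rfl fun z _ => real_inner_smul_left _ _ _
    calc ‖Y‖ ^ 2 = (inner ℝ Y Y : ℝ) := (real_inner_self_eq_norm_sq Y).symm
      _ = ∑ z ∈ t, w z * (inner ℝ z Y : ℝ) := hYY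
      _ ≤ ∑ z ∈ t, w z * (inner ℝ z₀ Y : ℝ) :=
          Finset.sum_le_sum fun z hz =>
            mul_le_mul_of_nonneg_left (hz₀ z hz) (hw0 z hz)
      _ = (inner ℝ z₀ Y : ℝ) := by rw [← Finset.sum_mul, hw1, one_mul]
  obtain ⟨i, -, hi⟩ := Finset.mem_image.mp hz₀t
  exact ⟨i, hi ▸ key⟩

/-- The slice `{y | ‖x - 2y‖ ≤ ‖x‖}` is the closed ball of center `x/2` and radius `‖x‖/2`. -/
lemma slice_eq_closedBall (x : EuclideanSpace ℝ (Fin d)) :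
    {y : EuclideanSpace ℝ (Fin d) | ‖x - (2:ℝ) • y‖ ≤ ‖x‖}
      = closedBall ((2⁻¹ : ℝ) • x) (‖x‖ / 2) := by
  ext y
  simp only [Set.mem_setOf_eq, mem_closedBall, dist_eq_norm]
  have h1 : y - (2⁻¹ : ℝ) • x = (2⁻¹ : ℝ) • ((2:ℝ) • y - x) := by
    rw [smul_sub, smul_smul]
    norm_num
  have h2 : ‖y - (2⁻¹ : ℝ) • x‖ = 2⁻¹ * ‖x - (2:ℝ) • y‖ := by
    rw [h1, norm_smul, ← norm_neg ((2:ℝ) • y - x), neg_sub]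
    norm_num
  rw [h2]
  constructor <;> intro h <;> linarith

/-- Volume of the intersection of the cap-ball with the spherical layer. -/
lemma cap_inter_layer_le (hd : 0 < d) {r : ℝ} (hr0 : 0 ≤ r)
    (x : EuclideanSpace ℝ (Fin d)) (hx1 : ‖x‖ ≤ 1) (hxr : r < ‖x‖) :
    volume (closedBall ((2⁻¹ : ℝ) • x) (‖x‖ / 2) ∩ (closedBall 0 1 \ closedBall 0 r))
      ≤ ENNReal.ofReal ((1 - r ^ d) * (1/2) ^ d)
          * volume (closedBall (0 : EuclideanSpace ℝ (Fin d)) 1) := by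
  set κ := volume (closedBall (0 : EuclideanSpace ℝ (Fin d)) 1) with hκ
  have hκtop : κ ≠ ∞ := measure_closedBall_lt_top.ne
  have hR : 0 < ‖x‖ := lt_of_le_of_lt hr0 hxr
  set C := closedBall ((2⁻¹ : ℝ) • x) (‖x‖ / 2) with hC
  set c : EuclideanSpace ℝ (Fin d) := (r / (2 * ‖x‖)) • x with hc
  have hcnorm : ‖c‖ = r / 2 := by
    rw [hc, norm_smul, Real.norm_eq_abs, abs_of_nonneg (by positivity)]
    field_simp
  have hball1 : closedBall c (r / 2) ⊆ C := by
    intro y hy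
    rw [mem_closedBall] at hy ⊢
    have hdist : dist c ((2⁻¹ : ℝ) • x) = ‖x‖ / 2 - r / 2 := by
      rw [dist_eq_norm, hc, ← sub_smul, norm_smul, Real.norm_eq_abs,
        abs_of_nonpos (by
          rw [sub_nonpos, div_le_iff₀ (by positivity)]
          nlinarith)]
      field_simp
      ring
    calc dist y ((2⁻¹ : ℝ) • x) ≤ dist y c + dist c ((2⁻¹ : ℝ) • x) := dist_triangle _ _ _
      _ ≤ r / 2 + (‖x‖ / 2 - r / 2) := by rw [hdist]; linarith
      _ = ‖x‖ / 2 := by ring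
  have hball2 : closedBall c (r / 2) ⊆ closedBall (0 : EuclideanSpace ℝ (Fin d)) r := by
    intro y hy
    rw [mem_closedBall] at hy ⊢
    calc dist y 0 ≤ dist y c + dist c 0 := dist_triangle _ _ _
      _ ≤ r / 2 + r / 2 := by
          rw [dist_zero_right, hcnorm]; linarith
      _ = r := by ring
  have hsub : C ∩ (closedBall 0 1 \ closedBall 0 r) ⊆ C \ closedBall 0 r :=
    fun y hy => ⟨hy.1, hy.2.2⟩
  have hCvol : volume C = ENNReal.ofReal ((‖x‖ / 2) ^ d) * κ := by
    rw [hC, Measure.addHaar_closedBall' volume _ (by positivity), finrank_euclideanSpace_fin, hκ]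
  have hcball : volume (closedBall c (r / 2)) = ENNReal.ofReal ((r / 2) ^ d) * κ := by
    rw [Measure.addHaar_closedBall' volume _ (by positivity), finrank_euclideanSpace_fin, hκ]
  have hsplit : volume (C \ closedBall 0 r) + volume (C ∩ closedBall 0 r) = volume C := by
    rw [← measure_union (Set.disjoint_left.mpr fun y hy h2 => hy.2 h2.2)
      (measurableSet_closedBall.inter measurableSet_closedBall),
      Set.diff_union_inter]
  have hmain : volume (C \ closedBall 0 r) + ENNReal.ofReal ((r / 2) ^ d) * κ
      ≤ ENNReal.ofReal ((1/2) ^ d) * κ := by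
    calc volume (C \ closedBall 0 r) + ENNReal.ofReal ((r / 2) ^ d) * κ
        = volume (C \ closedBall 0 r) + volume (closedBall c (r / 2)) := by rw [hcball]
      _ ≤ volume (C \ closedBall 0 r) + volume (C ∩ closedBall 0 r) := by
          gcongr
          exact Set.subset_inter hball1 hball2
      _ = volume C := hsplit
      _ = ENNReal.ofReal ((‖x‖ / 2) ^ d) * κ := hCvol
      _ ≤ ENNReal.ofReal ((1/2) ^ d) * κ :=
          mul_le_mul_left
            (ENNReal.ofReal_le_ofReal (pow_le_pow_left₀ (by positivity) (by linarith) d)) κ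
  have hr1 : r ≤ 1 := le_trans hxr.le hx1
  have h1d : r ^ d ≤ 1 := by
    calc r ^ d ≤ 1 ^ d := pow_le_pow_left₀ hr0 hr1 d
      _ = 1 := one_pow d
  have hkey : ENNReal.ofReal ((1/2) ^ d) * κ
      = ENNReal.ofReal ((1 - r ^ d) * (1/2) ^ d) * κ + ENNReal.ofReal ((r / 2) ^ d) * κ := by
    rw [← add_mul, ← ENNReal.ofReal_add (mul_nonneg (by linarith) (by positivity))
      (by positivity)]
    congr 2
    rw [div_pow, div_pow]
    ring
  calc volume (C ∩ (closedBall 0 1 \ closedBall 0 r))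
      ≤ volume (C \ closedBall 0 r) := measure_mono hsub
    _ ≤ ENNReal.ofReal ((1 - r ^ d) * (1/2) ^ d) * κ := by
        rw [hkey] at hmain
        exact ENNReal.le_of_add_le_add_right
          (ENNReal.mul_ne_top ENNReal.ofReal_ne_top hκtop) hmain

end Aux

/-- **Corollary.** If `n < ϑ · 2^d`, then a random point `Y` drawn (together with
`X_1, …, X_n`) independently and uniformly from the spherical layer `B_d \ rB_d`
(`0 ≤ r < 1`) is linearly separable from `{X_1, …, X_n}` (i.e.
`Y ∉ conv(X_1, …, X_n)`) with probability greater than `1 - ϑ`. -/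
theorem random_point_linearly_separable_of_card_lt
    (d : ℕ) (hd : 0 < d) (n : ℕ) (hn : 0 < n) (r ϑ : ℝ)
    (hr0 : 0 ≤ r) (hr1 : r < 1) (hϑ0 : 0 < ϑ) (hϑ1 : ϑ < 1)
    (hn' : (n : ℝ) < ϑ * 2 ^ d) :
    ∀ μ : Measure (EuclideanSpace ℝ (Fin d)),
      μ = (volume (closedBall (0 : EuclideanSpace ℝ (Fin d)) 1 \ closedBall 0 r))⁻¹ •
        volume.restrict (closedBall (0 : EuclideanSpace ℝ (Fin d)) 1 \ closedBall 0 r) →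
      1 - ϑ <
        ((Measure.pi fun _ : Fin (n + 1) => μ)
          {X | X (Fin.last n) ∉
            convexHull ℝ (Set.range fun i : Fin n => X i.castSucc)}).toReal := by
  intro μ hμ
  classical
  set L : Set (EuclideanSpace ℝ (Fin d)) := closedBall 0 1 \ closedBall 0 r with hL
  have hLm : MeasurableSet L := measurableSet_closedBall.diff measurableSet_closedBall
  set κ := volume (closedBall (0 : EuclideanSpace ℝ (Fin d)) 1) with hκ
  have hκtop : κ ≠ ∞ := measure_closedBall_lt_top.ne
  have hκ0 : κ ≠ 0 := (measure_closedBall_pos volume _ one_pos).ne'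
  have hrd1 : r ^ d < 1 := pow_lt_one₀ hr0 hr1 hd.ne'
  have hVeq : volume L = ENNReal.ofReal (1 - r ^ d) * κ := by
    have hVr : volume (closedBall (0 : EuclideanSpace ℝ (Fin d)) r)
        = ENNReal.ofReal (r ^ d) * κ := by
      rw [Measure.addHaar_closedBall' volume _ hr0, finrank_euclideanSpace_fin, hκ]
    rw [hL, measure_diff (closedBall_subset_closedBall hr1.le)
      measurableSet_closedBall.nullMeasurableSet
      (by rw [hVr]; exact ENNReal.mul_ne_top ENNReal.ofReal_ne_top hκtop), hVr,
      ENNReal.ofReal_sub _ (pow_nonneg hr0 d), ENNReal.ofReal_one,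
      ENNReal.sub_mul (fun _ _ => hκtop), one_mul]
  set V := volume L with hV
  have hV0 : V ≠ 0 := by
    rw [hVeq]
    exact mul_ne_zero (by simp [ENNReal.ofReal_eq_zero]; linarith) hκ0
  have hVtop : V ≠ ∞ := by
    rw [hVeq]
    exact ENNReal.mul_ne_top ENNReal.ofReal_ne_top hκtop
  haveI hμprob : IsProbabilityMeasure μ := by
    constructor
    rw [hμ, Measure.smul_apply, Measure.restrict_apply MeasurableSet.univ, Set.univ_inter,
      smul_eq_mul]
    exact ENNReal.inv_mul_cancel hV0 hVtop
  set B := ENNReal.ofReal ((1/2 : ℝ) ^ d) with hB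
  -- the cap bound for `μ`
  have hcap : ∀ x ∈ L, μ (closedBall ((2⁻¹ : ℝ) • x) (‖x‖ / 2)) ≤ B := by
    intro x hx
    have hx1 : ‖x‖ ≤ 1 := by
      have := hx.1; rwa [mem_closedBall, dist_zero_right] at this
    have hxr : r < ‖x‖ := by
      by_contra h
      exact hx.2 (by rw [mem_closedBall, dist_zero_right]; linarith)
    rw [hμ, Measure.smul_apply, Measure.restrict_apply measurableSet_closedBall, smul_eq_mul]
    calc V⁻¹ * volume (closedBall ((2⁻¹ : ℝ) • x) (‖x‖ / 2) ∩ L)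
        ≤ V⁻¹ * (ENNReal.ofReal ((1 - r ^ d) * (1/2) ^ d) * κ) := by
          gcongr
          exact cap_inter_layer_le hd hr0 x hx1 hxr
      _ = B * (V⁻¹ * (ENNReal.ofReal (1 - r ^ d) * κ)) := by
          rw [ENNReal.ofReal_mul (by linarith), hB]
          ring
      _ = B := by rw [← hVeq, ENNReal.inv_mul_cancel hV0 hVtop, mul_one]
  set P := Measure.pi fun _ : Fin (n + 1) => μ with hP
  set A : Fin n → Set (Fin (n + 1) → EuclideanSpace ℝ (Fin d)) := fun i =>
    {X | ‖X i.castSucc - (2:ℝ) • X (Fin.last n)‖ ≤ ‖X i.castSucc‖} with hA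
  -- bound on each `A i`
  have hAi : ∀ i : Fin n, P (A i) ≤ B := by
    intro i
    set e := MeasurableEquiv.piFinSuccAbove
      (fun _ : Fin (n + 1) => EuclideanSpace ℝ (Fin d)) (Fin.last n) with he
    set s : Set (EuclideanSpace ℝ (Fin d) × (Fin n → EuclideanSpace ℝ (Fin d))) :=
      {p | ‖p.2 i - (2:ℝ) • p.1‖ ≤ ‖p.2 i‖} with hs
    have hsm : MeasurableSet s := by
      have c1 : Continuous fun p : EuclideanSpace ℝ (Fin d) × (Fin n → EuclideanSpace ℝ (Fin d))
          => p.2 i := (continuous_apply i).comp continuous_snd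
      exact measurableSet_le ((c1.sub (continuous_fst.const_smul (2:ℝ))).norm.measurable)
        c1.norm.measurable
    have hpre : A i = e ⁻¹' s := by
      ext X
      simp only [hA, hs, Set.mem_preimage, Set.mem_setOf_eq, he,
        MeasurableEquiv.piFinSuccAbove_apply, Fin.insertNthEquiv, Equiv.coe_fn_symm_mk,
        Fin.removeNth, Fin.succAbove_last]
    have hmp := measurePreserving_piFinSuccAbove (fun _ : Fin (n + 1) => μ) (Fin.last n)
    rw [hP, hpre, hmp.measure_preimage_equiv s]
    have hprod : ((fun _ : Fin (n+1) => μ) (Fin.last n)).prod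
        (Measure.pi fun j : Fin n => (fun _ : Fin (n+1) => μ) ((Fin.last n).succAbove j))
        = μ.prod (Measure.pi fun _ : Fin n => μ) := rfl
    rw [hprod, Measure.prod_apply_symm hsm]
    have hae : ∀ᵐ xr ∂(Measure.pi fun _ : Fin n => μ), xr i ∈ L := by
      have hLc : μ Lᶜ = 0 := by
        rw [hμ, Measure.smul_apply, Measure.restrict_apply hLm.compl, smul_eq_mul]
        simp
      have h0 := Measure.pi_eval_preimage_null (μ := fun _ : Fin n => μ) (i := i) hLc
      exact ae_iff.2 h0
    calc ∫⁻ xr, μ ((fun y => (y, xr)) ⁻¹' s) ∂(Measure.pi fun _ : Fin n => μ)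
        ≤ ∫⁻ _, B ∂(Measure.pi fun _ : Fin n => μ) := by
          refine lintegral_mono_ae (hae.mono fun xr hxr => ?_)
          have hset : (fun y => (y, xr)) ⁻¹' s
              = closedBall ((2⁻¹ : ℝ) • xr i) (‖xr i‖ / 2) := by
            rw [← slice_eq_closedBall]
            rfl
          rw [hset]
          exact hcap _ hxr
      _ = B := by rw [lintegral_const, measure_univ, mul_one]
  -- inclusion of the complement event in the union of the `A i`
  set S : Set (Fin (n + 1) → EuclideanSpace ℝ (Fin d)) :=
    {X | X (Fin.last n) ∉ convexHull ℝ (Set.range fun i : Fin n => X i.castSucc)} with hS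
  have hcompl : Sᶜ ⊆ ⋃ i : Fin n, A i := by
    intro X hX
    simp only [hS, Set.mem_compl_iff, Set.mem_setOf_eq, not_not] at hX
    obtain ⟨i, hi⟩ := exists_inner_ge hn _ _ hX
    exact Set.mem_iUnion.2 ⟨i, (norm_sub_two_smul_le_iff _ _).2 hi⟩
  have hunion : P Sᶜ ≤ (n : ℝ≥0∞) * B := by
    calc P Sᶜ ≤ P (⋃ i : Fin n, A i) := measure_mono hcompl
      _ ≤ ∑' i : Fin n, P (A i) := measure_iUnion_le _
      _ = ∑ i : Fin n, P (A i) := tsum_fintype _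
      _ ≤ ∑ _i : Fin n, B := Finset.sum_le_sum fun i _ => hAi i
      _ = (n : ℝ≥0∞) * B := by
          rw [Finset.sum_const, Finset.card_univ, Fintype.card_fin, nsmul_eq_mul]
  have hone : (1 : ℝ≥0∞) ≤ P S + (n : ℝ≥0∞) * B := by
    calc (1 : ℝ≥0∞) = P Set.univ := measure_univ.symm
      _ = P (S ∪ Sᶜ) := by rw [Set.union_compl_self]
      _ ≤ P S + P Sᶜ := measure_union_le _ _
      _ ≤ P S + (n : ℝ≥0∞) * B := by gcongr
  have hPStop : P S ≠ ∞ := measure_ne_top _ _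
  have hcB : ((n : ℝ≥0∞) * B) ≠ ∞ :=
    ENNReal.mul_ne_top (ENNReal.natCast_ne_top n) ENNReal.ofReal_ne_top
  have h3 : (1 : ℝ) ≤ (P S).toReal + ((n : ℝ≥0∞) * B).toReal := by
    have := ENNReal.toReal_mono (by exact ENNReal.add_ne_top.2 ⟨hPStop, hcB⟩) hone
    rwa [ENNReal.toReal_one, ENNReal.toReal_add hPStop hcB] at this
  have h4 : ((n : ℝ≥0∞) * B).toReal = (n : ℝ) * (1/2) ^ d := by
    rw [ENNReal.toReal_mul, hB, ENNReal.toReal_ofReal (by positivity)]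
    simp
  have h5 : (n : ℝ) * (1/2) ^ d < ϑ := by
    have h2d : (0:ℝ) < 2 ^ d := by positivity
    rw [div_pow, one_pow, mul_div_assoc', mul_one, div_lt_iff₀ h2d]
    exact hn'
  rw [h4] at h3
  linarith
end

section
/- Let d be a positive integer, 0 ≤ r < 1, 0 < ϑ < 1, and n a positive integer with n < √(ϑ·2^d). If X_1, …, X_n are drawn independently from the uniform distribution on the spherical layer B_d \ rB_d, then the probability that the set {X_1, …, X_n} is linearly separable (i.e., for every index i, the point X_i does not belong to the convex hull of the remaining points {X_j : j ≠ i}) is greater than 1 − ϑ. -/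
open MeasureTheory Metric ENNReal

open Set
open scoped RealInnerProductSpace

open intervalIntegral in
lemma one_dim (c : ℝ) (hc : 0 ≤ c) :
    ∫⁻ t in Ioi (0:ℝ), ENNReal.ofReal (c - t) = ENNReal.ofReal (c ^ 2 / 2) := by
  have hsplit : Ioi (0:ℝ) = Ioc 0 c ∪ Ioi c := (Set.Ioc_union_Ioi_eq_Ioi hc).symm
  rw [hsplit, lintegral_union measurableSet_Ioi (Set.Ioc_disjoint_Ioi le_rfl)]
  have h2 : ∫⁻ t in Ioi c, ENNReal.ofReal (c - t) = 0 := by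
    have : ∀ t ∈ Ioi c, ENNReal.ofReal (c - t) = (0:ℝ≥0∞) := by
      intro t ht
      rw [ENNReal.ofReal_eq_zero]
      simp only [mem_Ioi] at ht
      linarith
    rw [setLIntegral_congr_fun measurableSet_Ioi this,
      lintegral_zero]
  rw [h2, add_zero]
  have hint : IntegrableOn (fun t => c - t) (Ioc 0 c) volume :=
    (continuous_const.sub continuous_id).integrableOn_Ioc
  rw [← ofReal_integral_eq_lintegral_ofReal hint]
  · congr 1
    rw [← intervalIntegral.integral_of_le (μ := volume) (f := fun t => c - t) hc]
    have : ∫ t in (0:ℝ)..c, (c - t) = c ^ 2 / 2 := by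
      rw [integral_sub intervalIntegrable_const intervalIntegrable_id]
      simp [integral_id]
      ring
    rw [this]
  · filter_upwards [ae_restrict_mem measurableSet_Ioc] with t ht
    simp only [mem_Ioc] at ht
    simp only [Pi.zero_apply]
    linarith [ht.2]

lemma sec_vol {d : ℕ} (r : ℝ) (hr0 : 0 ≤ r) (y : EuclideanSpace ℝ (Fin d))
    (hy : r < ‖y‖) :
    volume ((closedBall (0 : EuclideanSpace ℝ (Fin d)) 1 \ closedBall 0 r) ∩
      {x | ‖x‖ ^ 2 ≤ ⟪x, y⟫}) ≤
      ENNReal.ofReal ((‖y‖ ^ d - r ^ d) / 2 ^ d) *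
        volume (ball (0 : EuclideanSpace ℝ (Fin d)) 1) := by
  have hy0 : 0 < ‖y‖ := lt_of_le_of_lt hr0 hy
  set big := closedBall ((1 / 2 : ℝ) • y) (‖y‖ / 2)
  set c : EuclideanSpace ℝ (Fin d) := (r / (2 * ‖y‖)) • y
  set small := closedBall c (r / 2)
  have hcnorm : ‖c‖ = r / 2 := by
    rw [norm_smul, Real.norm_eq_abs, abs_of_nonneg (by positivity)]
    field_simp
  have hsb : small ⊆ big := by
    apply closedBall_subset_closedBall'
    have : dist c ((1 / 2 : ℝ) • y) = ‖y‖ / 2 - r / 2 := by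
      rw [dist_eq_norm, ← sub_smul, norm_smul, Real.norm_eq_abs]
      rw [abs_of_nonpos (by
        rw [sub_nonpos, div_le_div_iff₀ (by positivity) two_pos]
        nlinarith)]
      field_simp
      ring
    rw [this]; linarith
  have hsub : (closedBall (0 : EuclideanSpace ℝ (Fin d)) 1 \ closedBall 0 r) ∩
      {x | ‖x‖ ^ 2 ≤ ⟪x, y⟫} ⊆ big \ small := by
    rintro x ⟨⟨hx1, hxr⟩, hxin⟩
    simp only [mem_closedBall, dist_zero_right] at hx1
    simp only [mem_closedBall, not_le, dist_zero_right] at hxr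
    have hxr' : r < ‖x‖ := by simpa using hxr
    constructor
    · simp only [big, mem_closedBall, dist_eq_norm]
      have h1 : ‖x - (1 / 2 : ℝ) • y‖ ^ 2 ≤ (‖y‖ / 2) ^ 2 := by
        rw [norm_sub_sq_real, real_inner_smul_right, norm_smul, Real.norm_eq_abs]
        simp only [Set.mem_setOf_eq] at hxin
        rw [abs_of_nonneg (by norm_num : (0:ℝ) ≤ 1/2)]
        ring_nf
        nlinarith
      have := Real.sqrt_le_sqrt h1
      rwa [Real.sqrt_sq (norm_nonneg _), Real.sqrt_sq (by positivity)] at this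
    · intro hxs
      simp only [small, mem_closedBall, dist_eq_norm] at hxs
      have : ‖x‖ ≤ r := by
        calc ‖x‖ ≤ ‖x - c‖ + ‖c‖ := by
              simpa using norm_add_le (x - c) c
        _ ≤ r / 2 + r / 2 := by rw [hcnorm]; linarith
        _ = r := by ring
      linarith
  calc volume _ ≤ volume (big \ small) := measure_mono hsub
    _ = volume big - volume small := by
        apply measure_diff hsb measurableSet_closedBall.nullMeasurableSet
          (measure_closedBall_lt_top).ne
    _ = ENNReal.ofReal ((‖y‖ / 2) ^ d) * volume (ball (0 : EuclideanSpace ℝ (Fin d)) 1)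
        - ENNReal.ofReal ((r / 2) ^ d) * volume (ball (0 : EuclideanSpace ℝ (Fin d)) 1) := by
        rw [Measure.addHaar_closedBall volume _ (by positivity),
          Measure.addHaar_closedBall volume _ (by positivity), finrank_euclideanSpace_fin]
    _ ≤ ENNReal.ofReal ((‖y‖ ^ d - r ^ d) / 2 ^ d) *
        volume (ball (0 : EuclideanSpace ℝ (Fin d)) 1) := by
        rw [← ENNReal.sub_mul (fun _ _ => measure_ball_lt_top.ne), ← ENNReal.ofReal_sub _ (by positivity)]
        apply mul_le_mul_left (le_of_eq ?_)
        congr 1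
        rw [div_pow, div_pow, div_sub_div_same]

lemma radial {d : ℕ} (hd : 0 < d) (r : ℝ) (hr0 : 0 ≤ r) (hr1 : r < 1) :
    ∫⁻ y in (closedBall (0 : EuclideanSpace ℝ (Fin d)) 1 \ closedBall 0 r),
        ENNReal.ofReal (‖y‖ ^ d - r ^ d) ∂volume =
      volume (ball (0 : EuclideanSpace ℝ (Fin d)) 1) *
        ENNReal.ofReal ((1 - r ^ d) ^ 2 / 2) := by
  set E := EuclideanSpace ℝ (Fin d)
  set A : Set E := closedBall (0 : E) 1 \ closedBall 0 r with hA
  set V := volume (ball (0 : E) 1) with hV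
  have hAmeas : MeasurableSet A :=
    measurableSet_closedBall.diff measurableSet_closedBall
  have hfm : AEMeasurable (fun y : E => ‖y‖ ^ d - r ^ d) (volume.restrict A) :=
    ((continuous_norm.pow d).sub continuous_const).aemeasurable
  have hfnn : 0 ≤ᵐ[volume.restrict A] fun y : E => ‖y‖ ^ d - r ^ d := by
    filter_upwards [ae_restrict_mem hAmeas] with y hy
    simp only [hA, mem_diff, mem_closedBall, dist_zero_right, not_le] at hy
    simp only [Pi.zero_apply, sub_nonneg]
    exact pow_le_pow_left₀ hr0 hy.2.le d
  rw [lintegral_eq_lintegral_meas_le _ hfnn hfm]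
  have key : ∀ t ∈ Ioi (0:ℝ),
      (volume.restrict A) {y : E | t ≤ ‖y‖ ^ d - r ^ d} =
        ENNReal.ofReal (1 - r ^ d - t) * V := by
    intro t ht
    simp only [mem_Ioi] at ht
    set ρ : ℝ := (r ^ d + t) ^ (d : ℝ)⁻¹ with hρ
    have hρ0 : 0 ≤ ρ := Real.rpow_nonneg (by positivity) _
    have hρd : ρ ^ d = r ^ d + t := Real.rpow_inv_natCast_pow (by positivity) hd.ne'
    have hset : {y : E | t ≤ ‖y‖ ^ d - r ^ d} ∩ A = closedBall 0 1 \ ball 0 ρ := by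
      ext y
      simp only [hA, mem_inter_iff, mem_setOf_eq, mem_diff, mem_closedBall, mem_ball,
        dist_zero_right, not_le, not_lt]
      constructor
      · rintro ⟨h1, h2, h3⟩
        refine ⟨h2, ?_⟩
        have : ρ ^ d ≤ ‖y‖ ^ d := by rw [hρd]; linarith
        exact le_of_pow_le_pow_left₀ hd.ne' (norm_nonneg _) this
      · rintro ⟨h1, h2⟩
        have h3 : ρ ^ d ≤ ‖y‖ ^ d := pow_le_pow_left₀ hρ0 h2 d
        rw [hρd] at h3
        refine ⟨by linarith, h1, ?_⟩
        by_contra hc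
        push_neg at hc
        have := pow_le_pow_left₀ (norm_nonneg y) hc d
        linarith
    rw [Measure.restrict_apply' hAmeas, hset]
    by_cases hρ1 : ρ ≤ 1
    · rw [measure_diff (ball_subset_closedBall.trans (closedBall_subset_closedBall hρ1))
        measurableSet_ball.nullMeasurableSet measure_ball_lt_top.ne,
        Measure.addHaar_closedBall volume _ zero_le_one,
        Measure.addHaar_ball_of_pos volume _ (by positivity : (0:ℝ) < ρ), finrank_euclideanSpace_fin, hρd]
      rw [← ENNReal.sub_mul (fun _ _ => measure_ball_lt_top.ne),
        ← ENNReal.ofReal_sub _ (by positivity)]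
      rw [one_pow, hV, sub_sub]
    · push_neg at hρ1
      have hempty : closedBall (0:E) 1 \ ball 0 ρ = ∅ := by
        rw [diff_eq_empty]
        exact closedBall_subset_ball hρ1
      rw [hempty, measure_empty]
      have h1 : 1 - r ^ d - t < 0 := by
        have : (1:ℝ) ^ d < ρ ^ d := by
          apply pow_lt_pow_left₀ hρ1 zero_le_one hd.ne'
        rw [hρd, one_pow] at this
        linarith
      rw [ENNReal.ofReal_of_nonpos h1.le, zero_mul]
  rw [setLIntegral_congr_fun measurableSet_Ioi key]
  rw [lintegral_mul_const' V _ measure_ball_lt_top.ne]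
  have h1r : (0:ℝ) ≤ 1 - r ^ d := by
    nlinarith [pow_le_pow_left₀ hr0 hr1.le d, (one_pow d : (1:ℝ)^d = 1)]
  rw [one_dim (1 - r ^ d) h1r]
  ring

lemma pair_bound {d : ℕ} (hd : 0 < d) (r : ℝ) (hr0 : 0 ≤ r) (hr1 : r < 1)
    (μ : Measure (EuclideanSpace ℝ (Fin d)))
    (hμ : μ = (volume (closedBall (0 : EuclideanSpace ℝ (Fin d)) 1 \ closedBall 0 r))⁻¹ •
        volume.restrict (closedBall (0 : EuclideanSpace ℝ (Fin d)) 1 \ closedBall 0 r)) :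
    (μ.prod μ) {q : EuclideanSpace ℝ (Fin d) × EuclideanSpace ℝ (Fin d) |
        ‖q.2‖ ^ 2 ≤ ⟪q.2, q.1⟫} ≤ (2 ^ (d + 1) : ℝ≥0∞)⁻¹ := by
  classical
  set E := EuclideanSpace ℝ (Fin d)
  set A : Set E := closedBall (0 : E) 1 \ closedBall 0 r with hA
  set V := volume (ball (0 : E) 1) with hV
  have hAmeas : MeasurableSet A := measurableSet_closedBall.diff measurableSet_closedBall
  haveI : Nonempty (Fin d) := ⟨⟨0, hd⟩⟩
  have hV0 : V ≠ 0 := (measure_ball_pos volume 0 one_pos).ne'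
  have hVtop : V ≠ ∞ := measure_ball_lt_top.ne
  have h1r : (0:ℝ) < 1 - r ^ d := by
    nlinarith [pow_lt_pow_left₀ hr1 hr0 hd.ne', (one_pow d : (1:ℝ)^d = 1)]
  -- volume of the layer
  have hvolA : volume A = ENNReal.ofReal (1 - r ^ d) * V := by
    rw [hA, measure_diff (closedBall_subset_closedBall hr1.le)
      measurableSet_closedBall.nullMeasurableSet measure_closedBall_lt_top.ne,
      Measure.addHaar_closedBall volume _ hr0, Measure.addHaar_closedBall volume _ zero_le_one,
      finrank_euclideanSpace_fin, one_pow,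
      ← ENNReal.sub_mul (fun _ _ => measure_ball_lt_top.ne),
      ← ENNReal.ofReal_sub _ (by positivity)]
  have hvolA0 : volume A ≠ 0 := by
    rw [hvolA]
    exact mul_ne_zero (by simp [ENNReal.ofReal_eq_zero]; linarith) hV0
  have hvolAtop : volume A ≠ ∞ := by
    rw [hvolA]; exact ENNReal.mul_ne_top ENNReal.ofReal_ne_top hVtop
  have hBmeas : MeasurableSet {q : E × E | ‖q.2‖ ^ 2 ≤ ⟪q.2, q.1⟫} := by
    apply measurableSet_le
    · exact (continuous_snd.norm.pow 2).measurable
    · exact (continuous_inner.comp (continuous_snd.prodMk continuous_fst)).measurable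
  haveI hprob : IsProbabilityMeasure μ := by
    constructor
    rw [hμ, Measure.smul_apply, Measure.restrict_apply_univ, smul_eq_mul]
    exact ENNReal.inv_mul_cancel hvolA0 hvolAtop
  -- sections
  have hsec : ∀ y : E, {x : E | (y, x) ∈ {q : E × E | ‖q.2‖ ^ 2 ≤ ⟪q.2, q.1⟫}} =
      {x : E | ‖x‖ ^ 2 ≤ ⟪x, y⟫} := fun y => rfl
  have hSmeas : ∀ y : E, MeasurableSet {x : E | ‖x‖ ^ 2 ≤ ⟪x, y⟫} := by
    intro y
    apply measurableSet_le
    · exact (continuous_norm.pow 2).measurable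
    · exact (Continuous.inner continuous_id continuous_const).measurable
  set k : ℝ≥0∞ := (2 ^ d : ℝ≥0∞)⁻¹ with hk
  have hofk : ∀ a : ℝ, ENNReal.ofReal (a / 2 ^ d) = ENNReal.ofReal a * k := by
    intro a
    rw [div_eq_mul_inv, ENNReal.ofReal_mul' (by positivity),
      ENNReal.ofReal_inv_of_pos (by positivity),
      ENNReal.ofReal_pow (by norm_num), ENNReal.ofReal_ofNat]
  -- main estimate
  have hmain : (μ.prod μ) {q : E × E | ‖q.2‖ ^ 2 ≤ ⟪q.2, q.1⟫} ≤
      (volume A)⁻¹ * ((volume A)⁻¹ * (V * ENNReal.ofReal ((1 - r ^ d) ^ 2 / 2)) * (k * V)) := by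
    rw [Measure.prod_apply hBmeas]
    have hbd : ∀ᵐ y ∂μ, μ {x : E | ‖x‖ ^ 2 ≤ ⟪x, y⟫} ≤
        (volume A)⁻¹ * (ENNReal.ofReal (‖y‖ ^ d - r ^ d) * (k * V)) := by
      have hae : ∀ᵐ y ∂μ, y ∈ A := by
        rw [hμ]
        exact Measure.ae_smul_measure (ae_restrict_mem hAmeas) _
      filter_upwards [hae] with y hy
      have hyr : r < ‖y‖ := by
        simp only [hA, mem_diff, mem_closedBall, dist_zero_right, not_le] at hy
        exact hy.2
      rw [hμ, Measure.smul_apply, Measure.restrict_apply' hAmeas, smul_eq_mul]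
      apply mul_le_mul_right
      calc volume ({x : E | ‖x‖ ^ 2 ≤ ⟪x, y⟫} ∩ A) = volume (A ∩ {x : E | ‖x‖ ^ 2 ≤ ⟪x, y⟫}) := by
            rw [Set.inter_comm]
        _ ≤ ENNReal.ofReal ((‖y‖ ^ d - r ^ d) / 2 ^ d) * V := sec_vol r hr0 y hyr
        _ = ENNReal.ofReal (‖y‖ ^ d - r ^ d) * k * V := by rw [hofk]
        _ = ENNReal.ofReal (‖y‖ ^ d - r ^ d) * (k * V) := by rw [mul_assoc]
    calc ∫⁻ y, μ {x : E | ‖x‖ ^ 2 ≤ ⟪x, y⟫} ∂μ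
        ≤ ∫⁻ y, (volume A)⁻¹ * (ENNReal.ofReal (‖y‖ ^ d - r ^ d) * (k * V)) ∂μ :=
          lintegral_mono_ae hbd
      _ = (volume A)⁻¹ * ((∫⁻ y, ENNReal.ofReal (‖y‖ ^ d - r ^ d) ∂μ) * (k * V)) := by
          rw [lintegral_const_mul' _ _ (ENNReal.inv_ne_top.mpr hvolA0),
            lintegral_mul_const' _ _ (ENNReal.mul_ne_top (by simp [hk]) hVtop)]
      _ = (volume A)⁻¹ * ((volume A)⁻¹ * (V * ENNReal.ofReal ((1 - r ^ d) ^ 2 / 2)) * (k * V)) := by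
          rw [hμ]
          rw [lintegral_smul_measure]
          congr 3
          exact radial hd r hr0 hr1
  refine le_trans hmain (le_of_eq ?_)
  -- final ennreal arithmetic
  rw [hvolA]
  set a := ENNReal.ofReal (1 - r ^ d) with haa
  have ha0 : a ≠ 0 := by
    simp only [haa, ne_eq, ENNReal.ofReal_eq_zero, not_le]
    linarith
  have hatop : a ≠ ∞ := ENNReal.ofReal_ne_top
  have haV0 : a * V ≠ 0 := mul_ne_zero ha0 hV0
  have haVtop : a * V ≠ ∞ := ENNReal.mul_ne_top hatop hVtop
  have hktop : k ≠ ∞ := by simp [hk]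
  have hL : (a * V)⁻¹ * ((a * V)⁻¹ * (V * ENNReal.ofReal ((1 - r ^ d) ^ 2 / 2)) * (k * V)) ≠ ∞ := by
    apply ENNReal.mul_ne_top (ENNReal.inv_ne_top.mpr haV0)
    apply ENNReal.mul_ne_top
    · exact ENNReal.mul_ne_top (ENNReal.inv_ne_top.mpr haV0)
        (ENNReal.mul_ne_top hVtop ENNReal.ofReal_ne_top)
    · exact ENNReal.mul_ne_top hktop hVtop
  have hR : ((2:ℝ≥0∞) ^ (d + 1))⁻¹ ≠ ∞ := by
    simp [ENNReal.inv_ne_top]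
  apply (ENNReal.toReal_eq_toReal_iff' hL hR).mp
  have hVt : (0:ℝ) < V.toReal := ENNReal.toReal_pos hV0 hVtop
  simp only [ENNReal.toReal_mul, ENNReal.toReal_inv, ENNReal.toReal_pow,
    ENNReal.toReal_ofNat, haa, ENNReal.toReal_ofReal h1r.le,
    ENNReal.toReal_ofReal (by positivity : (0:ℝ) ≤ (1 - r ^ d) ^ 2 / 2), hk]
  field_simp
  ring

lemma map_pair {n : ℕ} {α : Type*} [MeasurableSpace α] (μ : Measure α) [IsProbabilityMeasure μ]
    {i j : Fin n} (hij : i ≠ j) :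
    Measure.map (fun X : Fin n → α => (X j, X i)) (Measure.pi fun _ => μ) = μ.prod μ := by
  classical
  have hm : Measurable (fun X : Fin n → α => (X j, X i)) :=
    (measurable_pi_apply j).prodMk (measurable_pi_apply i)
  symm
  refine Measure.prod_eq fun s t hs ht => ?_
  rw [Measure.map_apply hm (hs.prod ht)]
  have hpre : (fun X : Fin n → α => (X j, X i)) ⁻¹' (s ×ˢ t) =
      Set.pi Set.univ (fun k => if k = j then s else if k = i then t else Set.univ) := by
    ext X
    simp only [mem_preimage, mem_prod, Set.mem_pi, Set.mem_univ, true_implies]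
    constructor
    · rintro ⟨h1, h2⟩ k
      by_cases hk1 : k = j
      · subst hk1; simp [h1]
      · by_cases hk2 : k = i
        · subst hk2; simp [hk1, h2]
        · simp [hk1, hk2]
    · intro hX
      constructor
      · have := hX j; simpa using this
      · have := hX i; simpa [if_neg hij] using this
  rw [hpre, Measure.pi_pi]
  set g : Fin n → ℝ≥0∞ := fun k => μ (if k = j then s else if k = i then t else Set.univ)
    with hg
  have hgj : g j = μ s := by simp [hg]
  have hgi : g i = μ t := by simp [hg, hij]
  have hrest : ∀ k ∈ (Finset.univ.erase j).erase i, g k = 1 := by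
    intro k hk
    rw [Finset.mem_erase] at hk
    obtain ⟨hki, hkj⟩ := hk
    rw [Finset.mem_erase] at hkj
    simp [hg, hki, hkj.1, measure_univ]
  rw [← Finset.mul_prod_erase Finset.univ g (Finset.mem_univ j),
    ← Finset.mul_prod_erase _ g (Finset.mem_erase.mpr ⟨hij, Finset.mem_univ i⟩),
    Finset.prod_congr rfl hrest]
  simp [hgj, hgi]

lemma hull_lemma {d : ℕ} {n : ℕ} (X : Fin n → EuclideanSpace ℝ (Fin d)) (i : Fin n)
    (h : ∀ j, j ≠ i → ⟪X i, X j⟫ < ‖X i‖ ^ 2) :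
    X i ∉ convexHull ℝ (X '' {j | j ≠ i}) := by
  intro hmem
  have hc : Convex ℝ {v : EuclideanSpace ℝ (Fin d) | ⟪X i, v⟫ < ‖X i‖ ^ 2} :=
    convex_halfSpace_lt (innerSL ℝ (X i)).toLinearMap.isLinear _
  have hsub : X '' {j | j ≠ i} ⊆ {v | ⟪X i, v⟫ < ‖X i‖ ^ 2} := by
    rintro _ ⟨j, hj, rfl⟩
    exact h j hj
  have := convexHull_min hsub hc hmem
  simp only [mem_setOf_eq, real_inner_self_eq_norm_sq] at this
  exact lt_irrefl _ this

lemma layer_isProb {d : ℕ} (hd : 0 < d) (r : ℝ) (hr0 : 0 ≤ r) (hr1 : r < 1)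
    (μ : Measure (EuclideanSpace ℝ (Fin d)))
    (hμ : μ = (volume (closedBall (0 : EuclideanSpace ℝ (Fin d)) 1 \ closedBall 0 r))⁻¹ •
        volume.restrict (closedBall (0 : EuclideanSpace ℝ (Fin d)) 1 \ closedBall 0 r)) :
    IsProbabilityMeasure μ := by
  set E := EuclideanSpace ℝ (Fin d)
  set A : Set E := closedBall (0 : E) 1 \ closedBall 0 r with hA
  haveI : Nonempty (Fin d) := ⟨⟨0, hd⟩⟩
  have hV0 : volume (ball (0:E) 1) ≠ 0 := (measure_ball_pos volume 0 one_pos).ne'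
  have hVtop : volume (ball (0:E) 1) ≠ ∞ := measure_ball_lt_top.ne
  have h1r : (0:ℝ) < 1 - r ^ d := by
    nlinarith [pow_lt_pow_left₀ hr1 hr0 hd.ne', (one_pow d : (1:ℝ)^d = 1)]
  have hvolA : volume A = ENNReal.ofReal (1 - r ^ d) * volume (ball (0:E) 1) := by
    rw [hA, measure_diff (closedBall_subset_closedBall hr1.le)
      measurableSet_closedBall.nullMeasurableSet measure_closedBall_lt_top.ne,
      Measure.addHaar_closedBall volume _ hr0, Measure.addHaar_closedBall volume _ zero_le_one,
      finrank_euclideanSpace_fin, one_pow,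
      ← ENNReal.sub_mul (fun _ _ => measure_ball_lt_top.ne),
      ← ENNReal.ofReal_sub _ (by positivity)]
  have hvolA0 : volume A ≠ 0 := by
    rw [hvolA]
    exact mul_ne_zero (by simp only [ne_eq, ENNReal.ofReal_eq_zero, not_le]; linarith) hV0
  have hvolAtop : volume A ≠ ∞ := by
    rw [hvolA]; exact ENNReal.mul_ne_top ENNReal.ofReal_ne_top hVtop
  constructor
  rw [hμ, Measure.smul_apply, Measure.restrict_apply_univ, smul_eq_mul]
  exact ENNReal.inv_mul_cancel hvolA0 hvolAtop

/-- **Corollary (Sidorov–Zolotykh).** If `n < √(ϑ · 2^d)`, then a random set of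
`n` points drawn independently and uniformly from the spherical layer
`B_d \ rB_d` (`0 ≤ r < 1`) is linearly separable (1-convex) with probability
greater than `1 - ϑ`. -/
theorem random_set_linearly_separable_of_card_lt
    (d : ℕ) (hd : 0 < d) (n : ℕ) (hn : 0 < n) (r ϑ : ℝ)
    (hr0 : 0 ≤ r) (hr1 : r < 1) (hϑ0 : 0 < ϑ) (hϑ1 : ϑ < 1)
    (hn' : (n : ℝ) < Real.sqrt (ϑ * 2 ^ d)) :
    ∀ μ : Measure (EuclideanSpace ℝ (Fin d)),
      μ = (volume (closedBall (0 : EuclideanSpace ℝ (Fin d)) 1 \ closedBall 0 r))⁻¹ •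
        volume.restrict (closedBall (0 : EuclideanSpace ℝ (Fin d)) 1 \ closedBall 0 r) →
      1 - ϑ <
        ((Measure.pi fun _ : Fin n => μ)
          {X | ∀ i : Fin n, X i ∉ convexHull ℝ (X '' {j | j ≠ i})}).toReal := by
  intro μ hμ
  classical
  set E := EuclideanSpace ℝ (Fin d)
  haveI hprob : IsProbabilityMeasure μ := layer_isProb hd r hr0 hr1 μ hμ
  set P : Measure (Fin n → E) := Measure.pi fun _ : Fin n => μ with hP
  haveI : IsProbabilityMeasure P := by rw [hP]; infer_instance
  set Bset : Fin n × Fin n → Set (Fin n → E) :=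
    fun p => {X | ‖X p.1‖ ^ 2 ≤ ⟪X p.1, X p.2⟫} with hBset
  have hBmeas : ∀ p : Fin n × Fin n, MeasurableSet (Bset p) := by
    intro p
    apply measurableSet_le
    · exact ((measurable_pi_apply p.1).norm.pow measurable_const)
    · exact (measurable_pi_apply p.1).inner (measurable_pi_apply p.2)
  set D : Set (Fin n → E) := ⋃ p ∈ Finset.univ.offDiag, Bset p with hD
  have hDmeas : MeasurableSet D :=
    Finset.measurableSet_biUnion _ (fun p _ => hBmeas p)
  -- the good event contains Dᶜ
  have hsub : Dᶜ ⊆ {X : Fin n → E | ∀ i : Fin n, X i ∉ convexHull ℝ (X '' {j | j ≠ i})} := by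
    intro X hX i
    apply hull_lemma X i
    intro j hj
    by_contra hc
    push_neg at hc
    exact hX (Set.mem_iUnion₂.mpr
      ⟨(i, j), Finset.mem_offDiag.mpr ⟨Finset.mem_univ _, Finset.mem_univ _, Ne.symm hj⟩, hc⟩)
  -- bound on each pair event
  have hpair : ∀ p ∈ Finset.univ.offDiag (α := Fin n), P (Bset p) ≤ (2 ^ (d + 1) : ℝ≥0∞)⁻¹ := by
    intro p hp
    rw [Finset.mem_offDiag] at hp
    have hij : p.1 ≠ p.2 := hp.2.2
    have hm : Measurable (fun X : Fin n → E => (X p.2, X p.1)) :=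
      (measurable_pi_apply p.2).prodMk (measurable_pi_apply p.1)
    have hB'meas : MeasurableSet {q : E × E | ‖q.2‖ ^ 2 ≤ ⟪q.2, q.1⟫} := by
      apply measurableSet_le
      · exact (continuous_snd.norm.pow 2).measurable
      · exact (continuous_inner.comp (continuous_snd.prodMk continuous_fst)).measurable
    have : P (Bset p) = (μ.prod μ) {q : E × E | ‖q.2‖ ^ 2 ≤ ⟪q.2, q.1⟫} := by
      rw [← map_pair μ hij, Measure.map_apply hm hB'meas]
      rfl
    rw [this]
    exact pair_bound hd r hr0 hr1 μ hμ
  have hDbound : P D ≤ (Finset.univ.offDiag (α := Fin n)).card • (2 ^ (d + 1) : ℝ≥0∞)⁻¹ := by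
    refine le_trans (measure_biUnion_finset_le _ _) ?_
    rw [← Finset.sum_const]
    exact Finset.sum_le_sum hpair
  have hcard : (Finset.univ.offDiag (α := Fin n)).card = n * n - n := by
    rw [Finset.offDiag_card, Finset.card_univ, Fintype.card_fin]
  have hn2 : (n:ℝ) ^ 2 < ϑ * 2 ^ d := (Real.lt_sqrt (by positivity)).mp hn'
  have hq : (P D).toReal < ϑ := by
    have h1 : P D ≤ (n * n - n : ℕ) • (2 ^ (d + 1) : ℝ≥0∞)⁻¹ := by
      rw [← hcard]; exact hDbound
    have htop : ((n * n - n : ℕ) • (2 ^ (d + 1) : ℝ≥0∞)⁻¹) ≠ ∞ := by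
      rw [nsmul_eq_mul]
      exact ENNReal.mul_ne_top (ENNReal.natCast_ne_top _)
        (ENNReal.inv_ne_top.mpr (by positivity))
    have h2 : (P D).toReal ≤ ((n * n - n : ℕ) : ℝ) * ((2:ℝ) ^ (d + 1))⁻¹ := by
      refine le_trans (ENNReal.toReal_mono htop h1) (le_of_eq ?_)
      rw [nsmul_eq_mul, ENNReal.toReal_mul, ENNReal.toReal_natCast, ENNReal.toReal_inv,
        ENNReal.toReal_pow, ENNReal.toReal_ofNat]
    have hT : (0:ℝ) < 2 ^ (d + 1) := by positivity
    calc (P D).toReal ≤ ((n * n - n : ℕ) : ℝ) * ((2:ℝ) ^ (d + 1))⁻¹ := h2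
      _ ≤ (n:ℝ) * n * ((2:ℝ) ^ (d + 1))⁻¹ := by
          apply mul_le_mul_of_nonneg_right _ (by positivity)
          calc ((n * n - n : ℕ) : ℝ) ≤ ((n * n : ℕ) : ℝ) := by
                exact_mod_cast Nat.sub_le _ _
            _ = (n:ℝ) * n := by push_cast; ring
      _ < ϑ := by
          rw [← div_eq_mul_inv, div_lt_iff₀ hT, pow_succ]
          have h2d : (0:ℝ) < 2 ^ d := by positivity
          nlinarith
  have hfinal : 1 - ϑ < (P Dᶜ).toReal := by
    rw [prob_compl_eq_one_sub hDmeas,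
      ENNReal.toReal_sub_of_le prob_le_one ENNReal.one_ne_top, ENNReal.toReal_one]
    linarith
  exact lt_of_lt_of_le hfinal (ENNReal.toReal_mono (measure_ne_top P _) (measure_mono hsub))
end

section
/- For any points X_1, …, X_n in a real inner product space, the convex hull conv(X_1, …, X_n) is contained in the union over i = 1, …, n of the closed balls S_i with center X_i/2 and radius ‖X_i‖/2 (that is, the balls having the segment from the origin 0 to X_i as a diameter). -/
open Metric

open scoped RealInnerProductSpace

section

variable {V : Type*} [NormedAddCommGroup V] [InnerProductSpace ℝ V]

theorem mem_closedBall_half_smul_iff_inner_sub_nonpos (x y : V) :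
    y ∈ closedBall ((1 / 2 : ℝ) • x) (‖x‖ / 2) ↔ ⟪y, y - x⟫ ≤ 0 := by
  have hsq : ‖y - (1 / 2 : ℝ) • x‖ ^ 2 = ⟪y, y - x⟫ + (‖x‖ / 2) ^ 2 := by
    rw [div_pow, ← real_inner_self_eq_norm_sq, ← real_inner_self_eq_norm_sq]
    simp only [inner_sub_left, inner_sub_right, real_inner_smul_left, real_inner_smul_right,
      real_inner_comm x y]
    ring
  rw [mem_closedBall, dist_eq_norm, ← sq_le_sq₀ (norm_nonneg _) (by positivity), hsq]
  constructor <;> intro h <;> linarith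

/-- If every point of `s` lay in the open half-space `{x | ⟪y, x⟫ < ⟪y, y⟫}`, so would `y`. -/
theorem exists_inner_sub_nonpos_of_mem_convexHull {s : Set V} {y : V}
    (hy : y ∈ convexHull ℝ s) : ∃ x ∈ s, ⟪y, y - x⟫ ≤ 0 := by
  by_contra! h
  have hs : s ⊆ {x | ⟪y, x⟫ < ⟪y, y⟫} := fun x hx => by
    simpa [inner_sub_right] using h x hx
  have hlt : ⟪y, y⟫ < ⟪y, y⟫ := convexHull_min hs (convex_halfSpace_lt (innerₛₗ ℝ y).isLinear _) hy
  exact lt_irrefl _ hlt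

end

/-- **Lemma (Bárány–Füredi / Elekes).** For any points `X_1, …, X_n` in a real
inner product space, the convex hull `conv(X_1, …, X_n)` is contained in the
union of the closed balls `S_i` with center `X_i / 2` and radius `‖X_i‖ / 2`
(the balls having the segment from the origin to `X_i` as a diameter). -/
theorem convexHull_subset_iUnion_balls
    {V : Type*} [NormedAddCommGroup V] [InnerProductSpace ℝ V]
    (n : ℕ) (X : Fin n → V) :
    convexHull ℝ (Set.range X) ⊆
      ⋃ i : Fin n, closedBall ((1 / 2 : ℝ) • X i) (‖X i‖ / 2) := by
  intro y hy
  obtain ⟨_, ⟨i, rfl⟩, hi⟩ := exists_inner_sub_nonpos_of_mem_convexHull hy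
  exact Set.mem_iUnion.2 ⟨i, (mem_closedBall_half_smul_iff_inner_sub_nonpos (X i) y).2 hi⟩
end

section
/- Let d be a positive integer, 0 ≤ r < 1, and let X_1, …, X_n be points of ℝ^d with ‖X_i‖ ≤ 1 for all i. Then the Lebesgue volume of conv(X_1, …, X_n) \ rB_d (the part of the convex hull lying outside the closed ball of radius r centered at the origin) is at most n·γ_d·(1 − r^d)/2^d, where γ_d is the volume of the unit ball in ℝ^d. -/
/-!
Every point `x` of `conv(X_1, …, X_n)` satisfies `‖x‖² ≤ ⟪X_i, x⟫` for some `i` (otherwise the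
open half-space `⟪·, x⟫ < ‖x‖²` would contain the hull, hence `x`), i.e. `x` lies in the ball
having the segment `[0, X_i]` as a diameter. Such a ball `B` has radius `ρ ≤ 1/2`, and its
homothetic copy `r • B` lies both in `B` and in `rB_d`, so `B \ rB_d` has volume at most
`vol B - vol (r • B) = ρ^d (1 - r^d) γ_d`.
-/

open MeasureTheory Metric ENNReal Module
open scoped RealInnerProductSpace

section Thales

variable {E : Type*} [NormedAddCommGroup E] [InnerProductSpace ℝ E]

theorem mem_closedBall_half_iff {x y : E} :
    x ∈ closedBall ((2 : ℝ)⁻¹ • y) (‖y‖ / 2) ↔ ‖x‖ ^ 2 ≤ ⟪y, x⟫ := by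
  have hexpand : ‖x - (2 : ℝ)⁻¹ • y‖ ^ 2 = ‖x‖ ^ 2 - ⟪y, x⟫ + (‖y‖ / 2) ^ 2 := by
    rw [norm_sub_sq_real, real_inner_smul_right, norm_smul, real_inner_comm]
    norm_num
    ring
  rw [mem_closedBall, dist_eq_norm, ← sq_le_sq₀ (norm_nonneg _) (by positivity), hexpand]
  constructor <;> intro h <;> linarith

theorem exists_norm_sq_le_inner_of_mem_convexHull_s5 {s : Set E} {x : E}
    (hx : x ∈ convexHull ℝ s) : ∃ y ∈ s, ‖x‖ ^ 2 ≤ ⟪y, x⟫ := by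
  by_contra! h
  have hhull : convexHull ℝ s ⊆ {y | ⟪x, y⟫ < ‖x‖ ^ 2} :=
    convexHull_min (fun y hy => by rw [Set.mem_ofPred_eq, real_inner_comm]; exact h y hy)
      (convex_halfSpace_lt (innerₗ E x).isLinear _)
  simpa using hhull hx

theorem convexHull_range_subset_iUnion_closedBall_half {ι : Type*} (X : ι → E) :
    convexHull ℝ (Set.range X) ⊆ ⋃ i, closedBall ((2 : ℝ)⁻¹ • X i) (‖X i‖ / 2) := by
  intro x hx
  obtain ⟨_, ⟨i, rfl⟩, hi⟩ := exists_norm_sq_le_inner_of_mem_convexHull_s5 hx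
  exact Set.mem_iUnion.2 ⟨i, mem_closedBall_half_iff.2 hi⟩

end Thales

section Annulus

variable {E : Type*} [NormedAddCommGroup E] [NormedSpace ℝ E]

theorem closedBall_smul_subset_inter {c : E} {ρ r : ℝ} (hc : ‖c‖ ≤ ρ) (hcρ : ‖c‖ + ρ ≤ 1)
    (hr0 : 0 ≤ r) (hr1 : r ≤ 1) :
    closedBall (r • c) (r * ρ) ⊆ closedBall c ρ ∩ closedBall 0 r := by
  intro y hy
  rw [mem_closedBall] at hy
  have hc' : dist (r • c) c = (1 - r) * ‖c‖ := by
    rw [dist_eq_norm, ← neg_sub, norm_neg, show c - r • c = (1 - r) • c by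
      rw [sub_smul, one_smul], norm_smul, Real.norm_of_nonneg (by linarith)]
  have hc0 : dist (r • c) 0 = r * ‖c‖ := by
    rw [dist_zero_right, norm_smul, Real.norm_of_nonneg hr0]
  constructor
  · rw [mem_closedBall]
    nlinarith [dist_triangle y (r • c) c]
  · rw [mem_closedBall]
    nlinarith [dist_triangle y (r • c) 0]

variable [FiniteDimensional ℝ E] [MeasurableSpace E] [BorelSpace E] (μ : Measure E)
  [μ.IsAddHaarMeasure]

theorem addHaar_closedBall_diff_closedBall_le {c : E} {ρ r : ℝ} (hc : ‖c‖ ≤ ρ)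
    (hcρ : ‖c‖ + ρ ≤ 1) (hr0 : 0 ≤ r) (hr1 : r ≤ 1) :
    μ (closedBall c ρ \ closedBall 0 r) ≤
      ENNReal.ofReal (ρ ^ finrank ℝ E * (1 - r ^ finrank ℝ E)) * μ (closedBall 0 1) := by
  have hρ : 0 ≤ ρ := (norm_nonneg c).trans hc
  have hsub := closedBall_smul_subset_inter hc hcρ hr0 hr1
  calc μ (closedBall c ρ \ closedBall 0 r)
      ≤ μ (closedBall c ρ \ closedBall (r • c) (r * ρ)) :=
        measure_mono (Set.sdiff_subset_sdiff_right fun y hy => (hsub hy).2)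
    _ = μ (closedBall c ρ) - μ (closedBall (r • c) (r * ρ)) :=
        measure_sdiff (fun y hy => (hsub hy).1) measurableSet_closedBall.nullMeasurableSet
          measure_closedBall_lt_top.ne
    _ = ENNReal.ofReal (ρ ^ finrank ℝ E * (1 - r ^ finrank ℝ E)) * μ (closedBall 0 1) := by
        rw [Measure.addHaar_closedBall' μ c hρ,
          Measure.addHaar_closedBall' μ (r • c) (by positivity),
          ← ENNReal.sub_mul (fun _ _ => measure_closedBall_lt_top.ne),
          ← ENNReal.ofReal_sub _ (by positivity)]
        congr 2
        ring

theorem addHaar_closedBall_half_diff_closedBall_le {y : E} {r : ℝ} (hy : ‖y‖ ≤ 1)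
    (hr0 : 0 ≤ r) (hr1 : r ≤ 1) :
    μ (closedBall ((2 : ℝ)⁻¹ • y) (‖y‖ / 2) \ closedBall 0 r) ≤
      ENNReal.ofReal (1 - r ^ finrank ℝ E) / 2 ^ finrank ℝ E * μ (closedBall 0 1) := by
  set k := finrank ℝ E
  have hc : ‖(2 : ℝ)⁻¹ • y‖ = ‖y‖ / 2 := by
    rw [norm_smul]; norm_num; ring
  refine (addHaar_closedBall_diff_closedBall_le μ hc.le (by linarith) hr0 hr1).trans ?_
  have hrk : 0 ≤ 1 - r ^ k := sub_nonneg.2 (pow_le_one₀ hr0 hr1)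
  have hbound : (‖y‖ / 2) ^ k * (1 - r ^ k) ≤ (1 - r ^ k) / 2 ^ k :=
    calc (‖y‖ / 2) ^ k * (1 - r ^ k) ≤ (1 / 2) ^ k * (1 - r ^ k) := by gcongr
      _ = (1 - r ^ k) / 2 ^ k := by rw [one_div_pow]; ring
  have hcast : ENNReal.ofReal ((1 - r ^ k) / 2 ^ k) = ENNReal.ofReal (1 - r ^ k) / 2 ^ k := by
    rw [ENNReal.ofReal_div_of_pos (by positivity), ENNReal.ofReal_pow zero_le_two,
      ENNReal.ofReal_ofNat]
  rw [← hcast]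
  gcongr

end Annulus

theorem volume_convexHull_diff_ball_le_general
    (d : ℕ) (n : ℕ) (r : ℝ) (hr0 : 0 ≤ r) (hr1 : r < 1)
    (X : Fin n → EuclideanSpace ℝ (Fin d)) (hX : ∀ i, ‖X i‖ ≤ 1) :
    volume (convexHull ℝ (Set.range X) \ closedBall 0 r) ≤
      (n : ℝ≥0∞) * volume (closedBall (0 : EuclideanSpace ℝ (Fin d)) 1) *
        ENNReal.ofReal (1 - r ^ d) / 2 ^ d := by
  set γ := volume (closedBall (0 : EuclideanSpace ℝ (Fin d)) 1)
  have hpiece : ∀ i, volume (closedBall ((2 : ℝ)⁻¹ • X i) (‖X i‖ / 2) \ closedBall 0 r) ≤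
      ENNReal.ofReal (1 - r ^ d) / 2 ^ d * γ := fun i => by
    simpa only [finrank_euclideanSpace_fin] using
      addHaar_closedBall_half_diff_closedBall_le volume (hX i) hr0 hr1.le
  calc volume (convexHull ℝ (Set.range X) \ closedBall 0 r)
      ≤ volume (⋃ i, closedBall ((2 : ℝ)⁻¹ • X i) (‖X i‖ / 2) \ closedBall 0 r) := by
        rw [← Set.iUnion_sdiff]
        exact measure_mono (Set.sdiff_subset_sdiff_left
          (convexHull_range_subset_iUnion_closedBall_half X))
    _ ≤ ∑ i, volume (closedBall ((2 : ℝ)⁻¹ • X i) (‖X i‖ / 2) \ closedBall 0 r) :=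
        measure_iUnion_fintype_le _ _
    _ ≤ ∑ _i : Fin n, ENNReal.ofReal (1 - r ^ d) / 2 ^ d * γ :=
        Finset.sum_le_sum fun i _ => hpiece i
    _ = (n : ℝ≥0∞) * γ * ENNReal.ofReal (1 - r ^ d) / 2 ^ d := by
        rw [Finset.sum_const, Finset.card_univ, Fintype.card_fin, nsmul_eq_mul, div_eq_mul_inv,
          div_eq_mul_inv]
        ring

/-- **Key volume estimate.** If `X_1, …, X_n ∈ B_d` (the closed unit ball of
`ℝ^d`) and `0 ≤ r < 1`, then the Lebesgue volume of the part of
`conv(X_1, …, X_n)` lying outside the closed ball `rB_d` is at most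
`n · γ_d · (1 - r^d) / 2^d`, where `γ_d` is the volume of the unit ball. -/
theorem volume_convexHull_diff_ball_le
    (d : ℕ) (hd : 0 < d) (n : ℕ) (r : ℝ) (hr0 : 0 ≤ r) (hr1 : r < 1)
    (X : Fin n → EuclideanSpace ℝ (Fin d)) (hX : ∀ i, ‖X i‖ ≤ 1) :
    volume (convexHull ℝ (Set.range X) \ closedBall 0 r) ≤
      (n : ℝ≥0∞) * volume (closedBall (0 : EuclideanSpace ℝ (Fin d)) 1) *
        ENNReal.ofReal (1 - r ^ d) / 2 ^ d :=
  volume_convexHull_diff_ball_le_general d n r hr0 hr1 X hX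
end

section
/- Fix real numbers r and ϑ with 0 < r < √((√5 − 1)/2) and 0 < ϑ < 1, and define g(d) = (r/√(1 − r²))^d · (√(1 + 2ϑ(1 − r²)^{d/2}/r^{2d}) − 1) for positive integers d. Then g(d) is asymptotically equivalent to √(2ϑ)/(1 − r²)^{d/4} as d → ∞, i.e., g(d)·(1 − r²)^{d/4}/√(2ϑ) → 1 as d → ∞. -/
/-!
Put `x_d = √(2ϑ) ((1 - r²)^{1/4} / r)^d`. A direct computation shows that the normalized bound
`g(d) (1 - r²)^{d/4} / √(2ϑ)` equals `(√(1 + x_d²) - 1) / x_d`, which tends to `1` as `x_d → ∞`.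
The condition `r² < (√5 - 1)/2` is exactly `r⁴ < 1 - r²`, i.e. the ratio `(1 - r²)^{1/4} / r`
exceeds `1`, so `x_d` grows geometrically.
-/

open Filter Real

lemma tendsto_sqrt_one_add_sq_sub_one_div_atTop :
    Tendsto (fun x : ℝ => (√(1 + x ^ 2) - 1) / x) atTop (nhds 1) := by
  have hlim : Tendsto (fun x : ℝ => √((x⁻¹) ^ 2 + 1) - x⁻¹) atTop (nhds (√(0 ^ 2 + 1) - 0)) :=
    ((tendsto_inv_atTop_zero.pow 2).add_const 1).sqrt.sub tendsto_inv_atTop_zero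
  rw [zero_pow two_ne_zero, zero_add, sqrt_one, sub_zero] at hlim
  refine hlim.congr' ?_
  filter_upwards [eventually_gt_atTop 0] with x hx
  rw [sub_div, ← sqrt_sq hx.le, ← sqrt_div' _ (sq_nonneg x), sqrt_sq hx.le, add_div,
    div_self (pow_ne_zero 2 hx.ne'), one_div, one_div, inv_pow, add_comm]

lemma pow_four_lt_one_sub_sq {r : ℝ} (hr0 : 0 ≤ r) (hr : r < √((√5 - 1) / 2)) :
    r ^ 4 < 1 - r ^ 2 := by
  have hr2 : r ^ 2 < (√5 - 1) / 2 := (lt_sqrt hr0).mp hr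
  have h5 : √5 ^ 2 = 5 := sq_sqrt (by norm_num)
  nlinarith [sq_nonneg (r ^ 2), sqrt_nonneg 5]

lemma gorban_tyukin_normalized_eq {c r ϑ : ℝ} (hc : 0 < c) (hr : 0 < r) (hϑ : 0 < ϑ) (d : ℕ) :
    (r / √c) ^ d * (√(1 + 2 * ϑ * c ^ ((d : ℝ) / 2) / r ^ (2 * d)) - 1) *
        c ^ ((d : ℝ) / 4) / √(2 * ϑ) =
      (√(1 + (√(2 * ϑ) * (c ^ (1 / 4 : ℝ) / r) ^ d) ^ 2) - 1) /
        (√(2 * ϑ) * (c ^ (1 / 4 : ℝ) / r) ^ d) := by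
  set a := c ^ (1 / 4 : ℝ) with ha
  have ha0 : 0 < a := rpow_pos_of_pos hc _
  have hpow {k : ℕ} (t : ℝ) (hk : t = k / 4) : c ^ t = a ^ k := by
    rw [ha, ← rpow_natCast, ← rpow_mul hc.le, hk]; ring_nf
  have hsqrt : √c = a ^ 2 := by rw [sqrt_eq_rpow, hpow (k := 2) _ (by norm_num)]
  have hhalf : c ^ ((d : ℝ) / 2) = a ^ (2 * d) := hpow _ (by push_cast; ring)
  have hquarter : c ^ ((d : ℝ) / 4) = a ^ d := hpow _ rfl
  set s := √(2 * ϑ)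
  have hs0 : 0 < s := sqrt_pos.mpr (by positivity)
  have hs2 : 2 * ϑ = s ^ 2 := (sq_sqrt (by positivity)).symm
  have harg : s ^ 2 * a ^ (2 * d) / r ^ (2 * d) = (s * (a / r) ^ d) ^ 2 := by
    rw [div_pow, pow_mul, pow_mul]; ring
  rw [hsqrt, hhalf, hquarter, hs2, harg, div_pow, div_pow, ← pow_mul]
  field_simp
  ring

theorem gorban_tyukin_bound_asymp_small_r_general
    (r ϑ : ℝ) (hr0 : 0 < r) (hr1 : r < Real.sqrt ((Real.sqrt 5 - 1) / 2))
    (hϑ0 : 0 < ϑ) :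
    Tendsto (fun d : ℕ =>
        ((r / Real.sqrt (1 - r ^ 2)) ^ d *
            (Real.sqrt (1 + 2 * ϑ * (1 - r ^ 2) ^ ((d : ℝ) / 2) / r ^ (2 * d)) - 1)) *
          (1 - r ^ 2) ^ ((d : ℝ) / 4) / Real.sqrt (2 * ϑ))
      atTop (nhds 1) := by
  have hr4 := pow_four_lt_one_sub_sq hr0.le hr1
  have hc : 0 < 1 - r ^ 2 := by linarith [pow_nonneg hr0.le 4]
  have hbase : 1 < (1 - r ^ 2) ^ (1 / 4 : ℝ) / r := by
    rw [one_lt_div hr0]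
    calc r = (r ^ 4) ^ (1 / 4 : ℝ) := by rw [← rpow_natCast, ← rpow_mul hr0.le]; norm_num
      _ < (1 - r ^ 2) ^ (1 / 4 : ℝ) := by gcongr
  have hx := (tendsto_pow_atTop_atTop_of_one_lt hbase).const_mul_atTop
    (sqrt_pos.mpr (by positivity : 0 < 2 * ϑ))
  exact (tendsto_sqrt_one_add_sq_sub_one_div_atTop.comp hx).congr fun d =>
    (gorban_tyukin_normalized_eq hc hr0 hϑ0 d).symm

/-- **Statement 1, case 3.** For fixed `0 < r < √((√5-1)/2)` and `0 < ϑ < 1`, the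
Gorban–Tyukin bound
`g(d) = (r/√(1-r²))^d (√(1 + 2ϑ(1-r²)^{d/2}/r^{2d}) - 1)` satisfies
`g(d) ~ √(2ϑ)/(1-r²)^{d/4}` as `d → ∞`, i.e.
`g(d)·(1-r²)^{d/4}/√(2ϑ) → 1`. -/
theorem gorban_tyukin_bound_asymp_small_r
    (r ϑ : ℝ) (hr0 : 0 < r) (hr1 : r < Real.sqrt ((Real.sqrt 5 - 1) / 2))
    (hϑ0 : 0 < ϑ) (hϑ1 : ϑ < 1) :
    Tendsto (fun d : ℕ =>
        ((r / Real.sqrt (1 - r ^ 2)) ^ d *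
            (Real.sqrt (1 + 2 * ϑ * (1 - r ^ 2) ^ ((d : ℝ) / 2) / r ^ (2 * d)) - 1)) *
          (1 - r ^ 2) ^ ((d : ℝ) / 4) / Real.sqrt (2 * ϑ))
      atTop (nhds 1) :=
  gorban_tyukin_bound_asymp_small_r_general r ϑ hr0 hr1 hϑ0
end

section
/- Fix real numbers r and ϑ with √((√5 − 1)/2) < r < 1 and 0 < ϑ < 1, and define f(d) = √ϑ/(1 − r²)^{d/4} and g(d) = (r/√(1 − r²))^d · (√(1 + 2ϑ(1 − r²)^{d/2}/r^{2d}) − 1) for positive integers d. Then f(d)/g(d) is asymptotically equivalent to (1/√ϑ)·(r²/√(1 − r²))^{d/2} as d → ∞, and consequently f(d)/g(d) → ∞ as d → ∞. -/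
/-!
Rationalizing, `√(1 + ε) - 1 = ε / (√(1 + ε) + 1)` with `ε = 2ϑ (√(1 - r²) / r²)^d`, and the
powers then collapse to the exact identity
`f(d) / g(d) = (√(1 + ε) + 1) / 2 · (1/√ϑ) (r² / √(1 - r²))^{d/2}`.
The condition on `r` is equivalent to `√(1 - r²) < r²`, so `ε → 0`, the first factor tends to `1`,
and the second tends to infinity.
-/

open Filter Real

lemma sqrt_one_add_sub_one {x : ℝ} (hx : 0 ≤ 1 + x) :
    √(1 + x) - 1 = x / (√(1 + x) + 1) := by
  have hpos : 0 < √(1 + x) + 1 := by positivity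
  rw [eq_div_iff hpos.ne']
  nlinarith [sq_sqrt hx]

lemma sqrt_pow_eq_rpow {s : ℝ} (hs : 0 ≤ s) (d : ℕ) : √s ^ d = s ^ ((d : ℝ) / 2) := by
  rw [sqrt_eq_rpow, ← rpow_natCast, ← rpow_mul hs]
  ring_nf

lemma sq_div_sqrt_rpow {r s : ℝ} (hr : 0 ≤ r) (hs : 0 ≤ s) (d : ℕ) :
    (r ^ 2 / √s) ^ ((d : ℝ) / 2) = r ^ d / s ^ ((d : ℝ) / 4) := by
  rw [div_rpow (by positivity) (sqrt_nonneg s), sqrt_eq_rpow, ← rpow_mul hs,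
    ← rpow_natCast, ← rpow_mul hr, ← rpow_natCast]
  ring_nf

lemma sqrt_one_sub_sq_lt_sq {r : ℝ} (hr : √((√5 - 1) / 2) < r) : √(1 - r ^ 2) < r ^ 2 := by
  have hr0 : 0 < r := (sqrt_nonneg _).trans_lt hr
  have h5 : √5 ^ 2 = 5 := sq_sqrt (by norm_num)
  have hr2 : (√5 - 1) / 2 < r ^ 2 := (sqrt_lt' hr0).mp hr
  rw [sqrt_lt' (by positivity)]
  -- `r⁴ + r² - 1 = (r² - (√5 - 1)/2) (r² + (√5 + 1)/2)`
  nlinarith [sqrt_nonneg 5]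

lemma bounds_quotient_eq {r s ϑ : ℝ} (hr : 0 < r) (hs : 0 < s) (hϑ : 0 < ϑ) (d : ℕ) :
    √ϑ / s ^ ((d : ℝ) / 4) /
        ((r / √s) ^ d * (√(1 + 2 * ϑ * s ^ ((d : ℝ) / 2) / r ^ (2 * d)) - 1)) =
      (√(1 + 2 * ϑ * (√s / r ^ 2) ^ d) + 1) / 2 *
        (1 / √ϑ * (r ^ 2 / √s) ^ ((d : ℝ) / 2)) := by
  have hε : 2 * ϑ * s ^ ((d : ℝ) / 2) / r ^ (2 * d) = 2 * ϑ * (√s / r ^ 2) ^ d := by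
    rw [← sqrt_pow_eq_rpow hs.le, div_pow, pow_mul]
    ring
  rw [hε, sqrt_one_add_sub_one (by positivity), sq_div_sqrt_rpow hr.le hs.le]
  have hsqrt_s : 0 < √s := sqrt_pos.mpr hs
  have hcancel : (r / √s) ^ d * (√s / r ^ 2) ^ d * r ^ d = 1 := by
    rw [← mul_pow, ← mul_pow, show r / √s * (√s / r ^ 2) * r = 1 by field_simp, one_pow]
  have hs_rpow : 0 < s ^ ((d : ℝ) / 4) := rpow_pos_of_pos hs _
  have hsqrt_ϑ : 0 < √ϑ := sqrt_pos.mpr hϑ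
  field_simp
  linear_combination sq_sqrt hϑ.le - ϑ * hcancel

theorem bounds_quotient_asymp_large_r_general
    (r ϑ : ℝ) (hr0 : Real.sqrt ((Real.sqrt 5 - 1) / 2) < r) (hr1 : r < 1)
    (hϑ0 : 0 < ϑ) :
    Tendsto (fun d : ℕ =>
        (Real.sqrt ϑ / (1 - r ^ 2) ^ ((d : ℝ) / 4) /
            ((r / Real.sqrt (1 - r ^ 2)) ^ d *
              (Real.sqrt (1 + 2 * ϑ * (1 - r ^ 2) ^ ((d : ℝ) / 2) / r ^ (2 * d)) - 1))) /
          (1 / Real.sqrt ϑ * (r ^ 2 / Real.sqrt (1 - r ^ 2)) ^ ((d : ℝ) / 2)))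
      atTop (nhds 1) ∧
    Tendsto (fun d : ℕ =>
        Real.sqrt ϑ / (1 - r ^ 2) ^ ((d : ℝ) / 4) /
          ((r / Real.sqrt (1 - r ^ 2)) ^ d *
            (Real.sqrt (1 + 2 * ϑ * (1 - r ^ 2) ^ ((d : ℝ) / 2) / r ^ (2 * d)) - 1)))
      atTop atTop := by
  have hr : 0 < r := (sqrt_nonneg _).trans_lt hr0
  have hs : 0 < 1 - r ^ 2 := by nlinarith
  have hlt := sqrt_one_sub_sq_lt_sq hr0
  have hfactor : Tendsto (fun d : ℕ => (√(1 + 2 * ϑ * (√(1 - r ^ 2) / r ^ 2) ^ d) + 1) / 2)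
      atTop (nhds 1) := by
    have hq := tendsto_pow_atTop_nhds_zero_of_lt_one (by positivity)
      ((div_lt_one (by positivity)).mpr hlt)
    simpa using (((hq.const_mul (2 * ϑ)).const_add 1).sqrt.add_const 1).div_const 2
  have hscale : Tendsto (fun d : ℕ => 1 / √ϑ * (r ^ 2 / √(1 - r ^ 2)) ^ ((d : ℝ) / 2))
      atTop atTop := by
    refine Tendsto.const_mul_atTop (by positivity) ?_
    refine (tendsto_rpow_atTop_of_base_gt_one _ ((one_lt_div (sqrt_pos.mpr hs)).mpr hlt)).comp ?_
    exact tendsto_natCast_atTop_atTop.atTop_div_const two_pos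
  have hscale_pos : ∀ d : ℕ, 0 < 1 / √ϑ * (r ^ 2 / √(1 - r ^ 2)) ^ ((d : ℝ) / 2) :=
    fun d => by positivity
  simp only [bounds_quotient_eq hr hs hϑ0]
  exact ⟨hfactor.congr fun d => (mul_div_cancel_right₀ _ (hscale_pos d).ne').symm,
    hfactor.pos_mul_atTop one_pos hscale⟩

/-- **Corollary, case 1.** For fixed `√((√5-1)/2) < r < 1` and `0 < ϑ < 1`, with
`f(d) = √ϑ/(1-r²)^{d/4}` (Gorban–Burton–Tyukin) and
`g(d) = (r/√(1-r²))^d (√(1 + 2ϑ(1-r²)^{d/2}/r^{2d}) - 1)` (Gorban–Tyukin), the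
quotient `f(d)/g(d)` is asymptotically `(1/√ϑ)·(r²/√(1-r²))^{d/2}`, and
consequently `f(d)/g(d) → ∞` as `d → ∞`. -/
theorem bounds_quotient_asymp_large_r
    (r ϑ : ℝ) (hr0 : Real.sqrt ((Real.sqrt 5 - 1) / 2) < r) (hr1 : r < 1)
    (hϑ0 : 0 < ϑ) (hϑ1 : ϑ < 1) :
    Tendsto (fun d : ℕ =>
        (Real.sqrt ϑ / (1 - r ^ 2) ^ ((d : ℝ) / 4) /
            ((r / Real.sqrt (1 - r ^ 2)) ^ d *
              (Real.sqrt (1 + 2 * ϑ * (1 - r ^ 2) ^ ((d : ℝ) / 2) / r ^ (2 * d)) - 1))) /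
          (1 / Real.sqrt ϑ * (r ^ 2 / Real.sqrt (1 - r ^ 2)) ^ ((d : ℝ) / 2)))
      atTop (nhds 1) ∧
    Tendsto (fun d : ℕ =>
        Real.sqrt ϑ / (1 - r ^ 2) ^ ((d : ℝ) / 4) /
          ((r / Real.sqrt (1 - r ^ 2)) ^ d *
            (Real.sqrt (1 + 2 * ϑ * (1 - r ^ 2) ^ ((d : ℝ) / 2) / r ^ (2 * d)) - 1)))
      atTop atTop :=
  bounds_quotient_asymp_large_r_general r ϑ hr0 hr1 hϑ0
end

section
/- Fix 0 < ϑ < 1, let r = √((√5 − 1)/2), and define f(d) = √ϑ/(1 − r²)^{d/4} and g(d) = (r/√(1 − r²))^d · (√(1 + 2ϑ(1 − r²)^{d/2}/r^{2d}) − 1) for positive integers d. Then for every positive integer d, f(d)/g(d) = (√(1 + 2ϑ) + 1)/(2√ϑ), and this constant is greater than 1. -/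
open Real

/-!
For `r² = (√5 - 1)/2` one has `1 - r² = r⁴`, so `(1 - r²)^{d/4} = r^d`, `√(1 - r²) = r²` and
`(1 - r²)^{d/2} = r^{2d}`. Hence `f(d) = √ϑ / r^d` and `g(d) = (√(1 + 2ϑ) - 1) / r^d`, and the
quotient `√ϑ / (√(1 + 2ϑ) - 1)` does not depend on `d`; rationalising the denominator gives the
stated constant.
-/

lemma pow_rpow_natCast_div {x : ℝ} (hx : 0 ≤ x) {n : ℕ} (hn : n ≠ 0) (m : ℕ) :
    (x ^ n) ^ ((m : ℝ) / n) = x ^ m := by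
  rw [← rpow_natCast_mul hx, mul_div_cancel₀ _ (Nat.cast_ne_zero.mpr hn), rpow_natCast]

lemma critical_r_pos_and_one_sub_sq {r : ℝ} (hr : r = √((√5 - 1) / 2)) :
    0 < r ∧ 1 - r ^ 2 = r ^ 4 := by
  have h5 : √5 ^ 2 = 5 := sq_sqrt (by norm_num)
  have hpos : 0 < (√5 - 1) / 2 := by nlinarith [sqrt_nonneg 5]
  have hr2 : r ^ 2 = (√5 - 1) / 2 := by rw [hr]; exact sq_sqrt hpos.le
  exact ⟨hr ▸ sqrt_pos.mpr hpos, by nlinarith [hr2]⟩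

lemma sqrt_div_sqrt_one_add_two_mul_sub_one {ϑ : ℝ} (hϑ : 0 < ϑ) :
    √ϑ / (√(1 + 2 * ϑ) - 1) = (√(1 + 2 * ϑ) + 1) / (2 * √ϑ) := by
  have hs : 0 < √ϑ := sqrt_pos.mpr hϑ
  have ha : 1 < √(1 + 2 * ϑ) := (lt_sqrt zero_le_one).mpr (by linarith)
  rw [div_eq_div_iff (by linarith) (by positivity)]
  nlinarith [sq_sqrt hϑ.le, sq_sqrt (by linarith : (0 : ℝ) ≤ 1 + 2 * ϑ)]

lemma one_lt_sqrt_one_add_two_mul_add_one_div {ϑ : ℝ} (hϑ0 : 0 < ϑ) (hϑ4 : ϑ < 4) :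
    1 < (√(1 + 2 * ϑ) + 1) / (2 * √ϑ) := by
  have hs : 0 < √ϑ := sqrt_pos.mpr hϑ0
  have hs2 : √ϑ < 2 := by
    rw [show (2 : ℝ) = √4 by rw [show (4 : ℝ) = 2 ^ 2 by norm_num, sqrt_sq zero_le_two]]
    exact sqrt_lt_sqrt hϑ0.le hϑ4
  -- `(1 + 2ϑ) - (2√ϑ - 1)² = 2√ϑ (2 - √ϑ) > 0`
  have hgap : (2 * √ϑ - 1) ^ 2 < √(1 + 2 * ϑ) ^ 2 := by
    rw [sq_sqrt (by linarith)]
    nlinarith [sq_sqrt hϑ0.le]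
  rw [one_lt_div (by positivity)]
  linarith [le_abs_self (2 * √ϑ - 1), abs_lt_of_sq_lt_sq hgap (sqrt_nonneg _)]

lemma bounds_quotient_eq_of_one_sub_sq_eq_pow_four {r ϑ : ℝ} (hr : 0 < r)
    (hr4 : 1 - r ^ 2 = r ^ 4) (hϑ : 0 < ϑ) (d : ℕ) :
    √ϑ / (1 - r ^ 2) ^ ((d : ℝ) / 4) /
        ((r / √(1 - r ^ 2)) ^ d * (√(1 + 2 * ϑ * (1 - r ^ 2) ^ ((d : ℝ) / 2) / r ^ (2 * d)) - 1)) =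
      (√(1 + 2 * ϑ) + 1) / (2 * √ϑ) := by
  have hf : (1 - r ^ 2) ^ ((d : ℝ) / 4) = r ^ d := by
    rw [hr4]; exact_mod_cast pow_rpow_natCast_div hr.le four_ne_zero d
  have hsqrt : √(1 - r ^ 2) = r ^ 2 := by
    rw [hr4, show r ^ 4 = (r ^ 2) ^ 2 by ring, sqrt_sq (by positivity)]
  have hg : (1 - r ^ 2) ^ ((d : ℝ) / 2) = r ^ (2 * d) := by
    rw [hr4, show (d : ℝ) / 2 = ((2 * d : ℕ) : ℝ) / (4 : ℕ) by push_cast; ring]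
    exact pow_rpow_natCast_div hr.le four_ne_zero _
  have hrd : r ^ (2 * d) ≠ 0 := pow_ne_zero _ hr.ne'
  rw [hf, hsqrt, hg, mul_div_assoc, div_self hrd, mul_one,
    show r / r ^ 2 = r⁻¹ by field_simp, inv_pow, ← div_eq_inv_mul,
    div_div_div_cancel_right₀ (pow_ne_zero _ hr.ne')]
  exact sqrt_div_sqrt_one_add_two_mul_sub_one hϑ

/-- **Corollary, case 2.** For `r = √((√5-1)/2)` and `0 < ϑ < 1`, with
`f(d) = √ϑ/(1-r²)^{d/4}` and
`g(d) = (r/√(1-r²))^d (√(1 + 2ϑ(1-r²)^{d/2}/r^{2d}) - 1)`, one has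
`f(d)/g(d) = (√(1+2ϑ)+1)/(2√ϑ)` for every positive integer `d`, and this
constant is greater than `1`. -/
theorem bounds_quotient_eq_critical_r
    (ϑ : ℝ) (hϑ0 : 0 < ϑ) (hϑ1 : ϑ < 1)
    (r : ℝ) (hr : r = Real.sqrt ((Real.sqrt 5 - 1) / 2)) :
    (∀ d : ℕ, 0 < d →
      Real.sqrt ϑ / (1 - r ^ 2) ^ ((d : ℝ) / 4) /
          ((r / Real.sqrt (1 - r ^ 2)) ^ d *
            (Real.sqrt (1 + 2 * ϑ * (1 - r ^ 2) ^ ((d : ℝ) / 2) / r ^ (2 * d)) - 1)) =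
        (Real.sqrt (1 + 2 * ϑ) + 1) / (2 * Real.sqrt ϑ)) ∧
    1 < (Real.sqrt (1 + 2 * ϑ) + 1) / (2 * Real.sqrt ϑ) := by
  obtain ⟨hr0, hr4⟩ := critical_r_pos_and_one_sub_sq hr
  exact ⟨fun d _ => bounds_quotient_eq_of_one_sub_sq_eq_pow_four hr0 hr4 hϑ0 d,
    one_lt_sqrt_one_add_two_mul_add_one_div hϑ0 (by linarith)⟩
end

section
/- Fix a positive integer n and a real number r with √2/2 < r < 1, and define g(d) = 1 − [(1 − r^d)(1 − (n − 1)(1 − r²)^{d/2}/2)]^n for positive integers d. Then g(d) is asymptotically equivalent to n·r^d as d → ∞, i.e., g(d)/(n·r^d) → 1 as d → ∞. -/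
/-!
Put `s = √(1 - r²)`, so that `(1 - r²)^{d/2} = s^d`; and `r > √2/2` means exactly
`s < r`. Hence the second factor only perturbs `u_d = 1 - (1 - r^d)(1 - (n-1)s^d/2)` by
`o(r^d)`, i.e. `u_d ~ r^d`. Since `1 - (1 - u)^n ~ n u` as `u → 0` (the polynomial has
derivative `n` at `0`), `g(d) = 1 - (1 - u_d)^n ~ n u_d ~ n r^d`.
-/

open Filter Topology Asymptotics

section

variable {𝕜 : Type*} [NontriviallyNormedField 𝕜]

theorem isEquivalent_one_sub_one_sub_pow [CharZero 𝕜] {n : ℕ} (hn : n ≠ 0) :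
    (fun x : 𝕜 => 1 - (1 - x) ^ n) ~[𝓝 0] fun x => n * x := by
  have hderiv : HasDerivAt (fun x : 𝕜 => 1 - (1 - x) ^ n) n 0 := by
    simpa using (((hasDerivAt_id (0 : 𝕜)).const_sub 1).pow n).const_sub 1
  refine IsLittleO.isEquivalent ?_
  simpa [mul_comm, Pi.sub_def] using hderiv.isLittleO.const_mul_right (Nat.cast_ne_zero.mpr hn)

theorem isEquivalent_one_sub_mul_one_sub {α : Type*} {l : Filter α} {a b : α → 𝕜}
    (hb : b =o[l] a) (ha : Tendsto a l (𝓝 0)) :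
    (fun x => 1 - (1 - a x) * (1 - b x)) ~[l] a := by
  have hsmall : (fun x => b x * (1 - a x)) =o[l] a := by
    simpa using hb.mul_isBigO ((ha.const_sub 1).isBigO_one (F := 𝕜))
  refine (IsEquivalent.refl.add_isLittleO hsmall).congr_left (.of_forall fun x => ?_)
  simp only [Pi.add_apply]
  ring

end

theorem Real.sqrt_one_sub_sq_lt {r : ℝ} (hr : √2 / 2 < r) : √(1 - r ^ 2) < r := by
  have h2 : √2 ^ 2 = 2 := Real.sq_sqrt (by norm_num)
  have hr0 : 0 < r := lt_of_le_of_lt (by positivity) hr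
  rw [Real.sqrt_lt' hr0]
  nlinarith [Real.sqrt_nonneg 2]

/-- **Statement 3, case 1.** For a fixed positive integer `n` and fixed
`√2/2 < r < 1`, the Gorban–Burton–Tyukin failure-probability bound
`g(d) = 1 - [(1 - r^d)(1 - (n-1)(1-r²)^{d/2}/2)]^n` satisfies `g(d) ~ n·r^d`
as `d → ∞`, i.e. `g(d)/(n·r^d) → 1`. -/
theorem fisher_failure_bound_asymp_large_r
    (n : ℕ) (hn : 0 < n) (r : ℝ) (hr0 : Real.sqrt 2 / 2 < r) (hr1 : r < 1) :
    Tendsto (fun d : ℕ =>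
        (1 - ((1 - r ^ d) * (1 - ((n : ℝ) - 1) * (1 - r ^ 2) ^ ((d : ℝ) / 2) / 2)) ^ n) /
          ((n : ℝ) * r ^ d))
      atTop (nhds 1) := by
  have hr : 0 < r := lt_of_le_of_lt (by positivity) hr0
  have hrd : Tendsto (r ^ ·) atTop (𝓝 0) := tendsto_pow_atTop_nhds_zero_of_lt_one hr.le hr1
  have hsmall : (fun d : ℕ => ((n : ℝ) - 1) * (1 - r ^ 2) ^ ((d : ℝ) / 2) / 2) =o[atTop]
      (r ^ ·) := by
    have hr2 : 0 ≤ 1 - r ^ 2 := by nlinarith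
    simp_rw [Real.rpow_div_two_eq_sqrt _ hr2, Real.rpow_natCast, mul_div_right_comm]
    exact (isLittleO_pow_pow_of_lt_left (Real.sqrt_nonneg _)
      (Real.sqrt_one_sub_sq_lt hr0)).const_mul_left _
  have hu := isEquivalent_one_sub_mul_one_sub hsmall hrd
  have hg := ((isEquivalent_one_sub_one_sub_pow (𝕜 := ℝ) hn.ne').comp_tendsto
    (hu.symm.tendsto_nhds hrd)).trans (IsEquivalent.refl.mul hu)
  have hne : ∀ᶠ d in atTop, (n : ℝ) * r ^ d ≠ 0 := .of_forall fun d => by positivity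
  refine (isEquivalent_iff_tendsto_one hne).mp (hg.congr_left (.of_forall fun d => ?_))
  simp only [Function.comp_apply, sub_sub_cancel]
end

section
/- Fix an integer n ≥ 2 and a real number r with 0 < r < √2/2, and define g(d) = 1 − [(1 − r^d)(1 − (n − 1)(1 − r²)^{d/2}/2)]^n for positive integers d. Then g(d) is asymptotically equivalent to (n(n−1)/2)·(1 − r²)^{d/2} as d → ∞, i.e., g(d)/((n(n−1)/2)·(1 − r²)^{d/2}) → 1 as d → ∞. -/
/-!
Put `s = √(1 - r²)`, so that `(1 - r²)^(d/2) = s^d`; the condition `r < √2/2` says exactly that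
`r < s`, hence `r^d = o(s^d)`. The base `y_d = (1 - r^d)(1 - (n-1)s^d/2)` of the `n`-th power then
satisfies `1 - y_d ~ ((n-1)/2) s^d → 0`, and `1 - y_d^n = (1 - y_d)(1 + y_d + ⋯ + y_d^(n-1))`
with the second factor tending to `n`.
-/

open Filter Asymptotics Topology

section Equivalents

variable {α 𝕜 : Type*} [NormedField 𝕜] {l : Filter α}

theorem one_sub_pow_isEquivalent [CharZero 𝕜] {y : α → 𝕜} (hy : Tendsto y l (𝓝 1)) {n : ℕ}
    (hn : n ≠ 0) : (fun i => 1 - y i ^ n) ~[l] fun i => n * (1 - y i) := by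
  have hsum : Tendsto (fun i => ∑ k ∈ Finset.range n, y i ^ k) l (𝓝 n) := by
    simpa using tendsto_finsetSum (Finset.range n) fun k _ => hy.pow k
  have hprod := ((isEquivalent_const_iff_tendsto (Nat.cast_ne_zero.2 hn)).2 hsum).mul
    (IsEquivalent.refl (u := fun i => 1 - y i))
  exact hprod.congr_left (Eventually.of_forall fun i => geom_sum_mul_neg (y i) n)

theorem one_sub_one_sub_mul_one_sub_isEquivalent {x t : α → 𝕜} (hx : Tendsto x l (𝓝 0))
    (hxt : x =o[l] t) {c : 𝕜} (hc : c ≠ 0) :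
    (fun i => 1 - (1 - x i) * (1 - c * t i)) ~[l] fun i => c * t i := by
  have hx_ct : x =o[l] fun i => c * t i := (isLittleO_const_mul_right_iff hc).2 hxt
  have hxct_ct : (fun i => x i * (c * t i)) =o[l] fun i => c * t i := by
    simpa using ((isLittleO_one_iff 𝕜).2 hx).mul_isBigO (isBigO_refl (fun i => c * t i) l)
  refine ((hx_ct.sub hxct_ct).add_isEquivalent IsEquivalent.refl).congr_left
    (Eventually.of_forall fun i => ?_)
  simp only [Pi.add_apply]
  ring

end Equivalents

theorem lt_sqrt_one_sub_sq {r : ℝ} (hr0 : 0 ≤ r) (hr : r < √2 / 2) : r < √(1 - r ^ 2) := by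
  have h2 : √2 ^ 2 = 2 := Real.sq_sqrt zero_le_two
  rw [Real.lt_sqrt hr0]
  nlinarith

/-- **Statement 3, case 2.** For a fixed integer `n ≥ 2` and fixed
`0 < r < √2/2`, the Gorban–Burton–Tyukin failure-probability bound
`g(d) = 1 - [(1 - r^d)(1 - (n-1)(1-r²)^{d/2}/2)]^n` satisfies
`g(d) ~ (n(n-1)/2)·(1-r²)^{d/2}` as `d → ∞`. -/
theorem fisher_failure_bound_asymp_small_r
    (n : ℕ) (hn : 2 ≤ n) (r : ℝ) (hr0 : 0 < r) (hr1 : r < Real.sqrt 2 / 2) :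
    Tendsto (fun d : ℕ =>
        (1 - ((1 - r ^ d) * (1 - ((n : ℝ) - 1) * (1 - r ^ 2) ^ ((d : ℝ) / 2) / 2)) ^ n) /
          ((n : ℝ) * ((n : ℝ) - 1) / 2 * (1 - r ^ 2) ^ ((d : ℝ) / 2)))
      atTop (nhds 1) := by
  set s := √(1 - r ^ 2)
  have hrs : r < s := lt_sqrt_one_sub_sq hr0.le hr1
  have hs0 : 0 < s := hr0.trans hrs
  have hs1 : s < 1 := (Real.sqrt_lt' one_pos).2 (by nlinarith)
  have hpow : ∀ d : ℕ, (1 - r ^ 2) ^ ((d : ℝ) / 2) = s ^ d := fun d => by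
    rw [Real.rpow_div_two_eq_sqrt _ (by nlinarith), Real.rpow_natCast]
  simp only [hpow]
  have hn1 : (1 : ℝ) < n := by exact_mod_cast hn
  have hc : ((n : ℝ) - 1) / 2 ≠ 0 := (div_pos (sub_pos.2 hn1) two_pos).ne'
  have hx := tendsto_pow_atTop_nhds_zero_of_lt_one hr0.le (hrs.trans hs1)
  have ht := tendsto_pow_atTop_nhds_zero_of_lt_one hs0.le hs1
  have hbase :=
    one_sub_one_sub_mul_one_sub_isEquivalent hx (isLittleO_pow_pow_of_lt_left hr0.le hrs) hc
  have hy : Tendsto (fun d : ℕ => (1 - r ^ d) * (1 - ((n : ℝ) - 1) / 2 * s ^ d)) atTop (𝓝 1) := by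
    simpa using ((tendsto_const_nhds (x := (1 : ℝ))).sub hx).mul
      ((tendsto_const_nhds (x := (1 : ℝ))).sub (ht.const_mul (((n : ℝ) - 1) / 2)))
  have hpow_base := (one_sub_pow_isEquivalent hy (by omega)).trans
    ((IsEquivalent.refl (u := fun _ => (n : ℝ))).mul hbase)
  have hg : (fun d : ℕ => 1 - ((1 - r ^ d) * (1 - ((n : ℝ) - 1) * s ^ d / 2)) ^ n) ~[atTop]
      fun d => (n : ℝ) * ((n : ℝ) - 1) / 2 * s ^ d := by
    refine (hpow_base.congr_left ?_).congr_right ?_ <;> refine Eventually.of_forall fun d => ?_ <;>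
      simp only [Pi.mul_apply] <;> ring
  exact (isEquivalent_iff_tendsto_one (Eventually.of_forall fun d =>
    (mul_pos (by nlinarith) (pow_pos hs0 d)).ne')).1 hg
end

section
/- Fix an integer n ≥ 2 and a real number r with 0 < r < √2/2, and define f(d) = n(n−1)/2^d and g(d) = 1 − [(1 − r^d)(1 − (n − 1)(1 − r²)^{d/2}/2)]^n for positive integers d. Then g(d)/f(d) is asymptotically equivalent to (4(1 − r²))^{d/2}/2 as d → ∞, and consequently g(d)/f(d) → ∞ as d → ∞. -/
open Filter Topology Finset

/-! With `t = √(1 - r²)` and `u = (1 - r^d)(1 - (n-1)t^d/2)` one has `(4(1-r²))^{d/2} = (2t)^d` and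
`1 - u^n = (1 - u)(1 + u + ⋯ + u^{n-1})`. Dividing by `f(d) · (2t)^d/2 = n(n-1)t^d/2`, the first
factor becomes `2(r/t)^d/(n-1) + 1 - r^d → 1`, because `r < t` exactly when `r² < 1/2`, and the
second becomes `(1 + u + ⋯ + u^{n-1})/n → 1`, because `u → 1`. Finally `(2t)^d → ∞` as `2t > 1`. -/

lemma Real.rpow_natCast_div_two {x : ℝ} (hx : 0 ≤ x) (d : ℕ) : x ^ ((d : ℝ) / 2) = √x ^ d := by
  rw [Real.sqrt_eq_rpow, ← Real.rpow_mul_natCast hx]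
  ring_nf

lemma tendsto_geom_sum_div_of_tendsto_one {α : Type*} {l : Filter α} {u : α → ℝ}
    (hu : Tendsto u l (𝓝 1)) {n : ℕ} (hn : n ≠ 0) :
    Tendsto (fun x => (∑ k ∈ range n, u x ^ k) / n) l (𝓝 1) := by
  have hsum : Tendsto (fun x => ∑ k ∈ range n, u x ^ k) l (𝓝 (n : ℝ)) := by
    simpa using tendsto_finsetSum (range n) fun k _ => hu.pow k
  have hn' : (n : ℝ) ≠ 0 := Nat.cast_ne_zero.mpr hn
  simpa [div_self hn'] using hsum.div_const (n : ℝ)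

noncomputable def linearBound (n d : ℕ) : ℝ := n * (n - 1) / 2 ^ d

noncomputable def fisherBase (n : ℕ) (r t : ℝ) (d : ℕ) : ℝ := (1 - r ^ d) * (1 - (n - 1) * t ^ d / 2)

/-- `fisherBound n r √(1 - r²) d` is the bound `g(d)` of Gorban, Burton and Tyukin. -/
noncomputable def fisherBound (n : ℕ) (r t : ℝ) (d : ℕ) : ℝ := 1 - fisherBase n r t d ^ n

lemma fisherBound_div_linearBound_div {n : ℕ} (hn : 2 ≤ n) (r : ℝ) {t : ℝ} (ht : t ≠ 0) (d : ℕ) :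
    fisherBound n r t d / linearBound n d / ((2 * t) ^ d / 2) =
      (2 / (n - 1) * (r / t) ^ d + 1 - r ^ d) *
        ((∑ k ∈ range n, fisherBase n r t d ^ k) / n) := by
  have hn0 : (n : ℝ) ≠ 0 := by positivity
  have hn1 : (n : ℝ) - 1 ≠ 0 := by
    rw [sub_ne_zero]
    exact_mod_cast (by omega : n ≠ 1)
  rw [fisherBound, ← mul_neg_geom_sum, linearBound, fisherBase, div_pow, mul_pow]
  field_simp
  ring

lemma tendsto_fisherBase {n : ℕ} {r t : ℝ} (hr : |r| < 1) (ht : |t| < 1) :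
    Tendsto (fisherBase n r t) atTop (𝓝 1) := by
  have hrd := tendsto_pow_atTop_nhds_zero_of_abs_lt_one hr
  have htd := tendsto_pow_atTop_nhds_zero_of_abs_lt_one ht
  have h := ((tendsto_const_nhds (x := (1 : ℝ))).sub hrd).mul
    ((tendsto_const_nhds (x := (1 : ℝ))).sub ((htd.const_mul ((n : ℝ) - 1)).div_const 2))
  rw [mul_zero, zero_div, sub_zero, mul_one] at h
  exact h

lemma tendsto_fisherBound_div_linearBound_div {n : ℕ} (hn : 2 ≤ n) {r t : ℝ} (hr : 0 ≤ r)
    (hrt : r < t) (ht : t < 1) :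
    Tendsto (fun d => fisherBound n r t d / linearBound n d / ((2 * t) ^ d / 2)) atTop (𝓝 1) := by
  have ht0 : 0 < t := hr.trans_lt hrt
  have hfirst : Tendsto (fun d : ℕ => 2 / ((n : ℝ) - 1) * (r / t) ^ d + 1 - r ^ d) atTop (𝓝 1) := by
    have hrtd := tendsto_pow_atTop_nhds_zero_of_lt_one (div_nonneg hr ht0.le)
      ((div_lt_one ht0).mpr hrt)
    have hrd := tendsto_pow_atTop_nhds_zero_of_lt_one hr (hrt.trans ht)
    simpa using ((hrtd.const_mul (2 / ((n : ℝ) - 1))).add_const 1).sub hrd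
  have hsecond := tendsto_geom_sum_div_of_tendsto_one
    (tendsto_fisherBase (n := n) (r := r) (t := t) (abs_lt.mpr ⟨by linarith, by linarith⟩)
      (abs_lt.mpr ⟨by linarith, by linarith⟩)) (by omega : n ≠ 0)
  simpa [fisherBound_div_linearBound_div hn r ht0.ne'] using hfirst.mul hsecond

/-- **Statement 4, case 2.** For a fixed integer `n ≥ 2` and fixed
`0 < r < √2/2`, with `f(d) = n(n-1)/2^d` and
`g(d) = 1 - [(1 - r^d)(1 - (n-1)(1-r²)^{d/2}/2)]^n`, the quotient `g(d)/f(d)`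
is asymptotically `(4(1-r²))^{d/2}/2`, and consequently `g(d)/f(d) → ∞`. -/
theorem failure_bounds_quotient_small_r
    (n : ℕ) (hn : 2 ≤ n) (r : ℝ) (hr0 : 0 < r) (hr1 : r < Real.sqrt 2 / 2) :
    Tendsto (fun d : ℕ =>
        ((1 - ((1 - r ^ d) * (1 - ((n : ℝ) - 1) * (1 - r ^ 2) ^ ((d : ℝ) / 2) / 2)) ^ n) /
            ((n : ℝ) * ((n : ℝ) - 1) / 2 ^ d)) /
          ((4 * (1 - r ^ 2)) ^ ((d : ℝ) / 2) / 2))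
      atTop (nhds 1) ∧
    Tendsto (fun d : ℕ =>
        (1 - ((1 - r ^ d) * (1 - ((n : ℝ) - 1) * (1 - r ^ 2) ^ ((d : ℝ) / 2) / 2)) ^ n) /
          ((n : ℝ) * ((n : ℝ) - 1) / 2 ^ d))
      atTop atTop := by
  have hr2 : r ^ 2 < 1 / 2 := by
    nlinarith [Real.sq_sqrt (zero_le_two : (0 : ℝ) ≤ 2), Real.sqrt_nonneg 2]
  set t := √(1 - r ^ 2) with ht
  have hts : t ^ 2 = 1 - r ^ 2 := Real.sq_sqrt (by nlinarith)
  have ht0 : 0 < t := Real.sqrt_pos.mpr (by nlinarith)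
  have h2t : √(4 * (1 - r ^ 2)) = 2 * t := by
    rw [Real.sqrt_eq_iff_mul_self_eq (by nlinarith) (by positivity)]
    nlinarith
  simp only [Real.rpow_natCast_div_two (by nlinarith : (0 : ℝ) ≤ 1 - r ^ 2),
    Real.rpow_natCast_div_two (by nlinarith : (0 : ℝ) ≤ 4 * (1 - r ^ 2)), h2t, ← ht]
  have hratio : Tendsto (fun d => fisherBound n r t d / linearBound n d / ((2 * t) ^ d / 2))
      atTop (𝓝 1) :=
    tendsto_fisherBound_div_linearBound_div hn hr0.le (by nlinarith) (by nlinarith)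
  have hgrowth : Tendsto (fun d : ℕ => (2 * t) ^ d / 2) atTop atTop :=
    (tendsto_pow_atTop_atTop_of_one_lt (by nlinarith)).atTop_div_const two_pos
  refine ⟨hratio, (hratio.pos_mul_atTop one_pos hgrowth).congr fun d => ?_⟩
  exact div_mul_cancel₀ _ (by positivity)
end

section
/- Fix an integer n ≥ 2, let r = √2/2, and define f(d) = n(n−1)/2^d and g(d) = 1 − [(1 − r^d)(1 − (n − 1)(1 − r²)^{d/2}/2)]^n for positive integers d. Then g(d)/f(d) is asymptotically equivalent to 2^{d/2}(n+1)/(2(n−1)) as d → ∞, and consequently g(d)/f(d) → ∞ as d → ∞. -/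
/-!
Put `x = r ^ d`. Since `r² = 1 - r² = 1/2`, every quantity in the statement is a power of `x`:
`(1 - r²)^{d/2} = x`, `2^d = x⁻²` and `2^{d/2} = x⁻¹`. The quotient `g(d)/f(d)` divided by
`2^{d/2}(n+1)/(2(n-1))` then equals `2/(n(n+1))` times the difference quotient `F(x)/x` of
`F(y) = 1 - ((1 - y)(1 - (n-1)y/2))^n` at `0`, and `F(0) = 0`, `F'(0) = n(n+1)/2`.
Since `x → 0`, the ratio tends to `1`, and `g/f → ∞` because `2^{d/2} → ∞`.
-/

open Filter Topology

theorem hasDerivAt_one_sub_pow_one_sub_mul_one_sub_mul (n : ℕ) (c : ℝ) :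
    HasDerivAt (fun y : ℝ => 1 - ((1 - y) * (1 - c * y)) ^ n) (n * (1 + c)) 0 := by
  have h := ((((hasDerivAt_id (0 : ℝ)).const_sub 1).mul
    (((hasDerivAt_id (0 : ℝ)).const_mul c).const_sub 1)).pow n).const_sub 1
  refine h.congr_deriv ?_
  simp only [Pi.mul_apply, id, mul_zero, sub_zero, mul_one, one_pow]
  ring

theorem tendsto_one_sub_pow_one_sub_mul_one_sub_mul_div (n : ℕ) (c : ℝ) :
    Tendsto (fun x : ℝ => (1 - ((1 - x) * (1 - c * x)) ^ n) / x) (𝓝[≠] 0)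
      (𝓝 (n * (1 + c))) := by
  refine (hasDerivAt_iff_tendsto_slope.mp
    (hasDerivAt_one_sub_pow_one_sub_mul_one_sub_mul n c)).congr fun x => ?_
  simp [slope_def_field]

theorem sq_rpow_natCast_div_two {r : ℝ} (hr : 0 ≤ r) (d : ℕ) :
    (r ^ 2) ^ ((d : ℝ) / 2) = r ^ d := by
  rw [← Real.rpow_natCast r 2, ← Real.rpow_mul hr, ← Real.rpow_natCast r d]
  congr 1
  push_cast
  ring

theorem failure_quotient_eq_mul_div {n : ℕ} (hn : (n : ℝ) - 1 ≠ 0) {x : ℝ} (hx : x ≠ 0) :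
    ((1 - ((1 - x) * (1 - ((n : ℝ) - 1) * x / 2)) ^ n) / ((n : ℝ) * ((n : ℝ) - 1) / (x ^ 2)⁻¹)) /
        (x⁻¹ * ((n : ℝ) + 1) / (2 * ((n : ℝ) - 1)))
      = (1 - ((1 - x) * (1 - ((n : ℝ) - 1) / 2 * x)) ^ n) / x * (2 / ((n : ℝ) * ((n : ℝ) + 1))) := by
  rcases eq_or_ne (n : ℝ) 0 with hn0 | hn0
  · simp [hn0]
  have hn1 : (n : ℝ) + 1 ≠ 0 := by positivity
  field_simp

/-- **Statement 4, case 3.** For a fixed integer `n ≥ 2` and `r = √2/2`, with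
`f(d) = n(n-1)/2^d` and `g(d) = 1 - [(1 - r^d)(1 - (n-1)(1-r²)^{d/2}/2)]^n`,
the quotient `g(d)/f(d)` is asymptotically `2^{d/2}(n+1)/(2(n-1))`, and
consequently `g(d)/f(d) → ∞`. -/
theorem failure_bounds_quotient_critical_r
    (n : ℕ) (hn : 2 ≤ n) (r : ℝ) (hr : r = Real.sqrt 2 / 2) :
    Tendsto (fun d : ℕ =>
        ((1 - ((1 - r ^ d) * (1 - ((n : ℝ) - 1) * (1 - r ^ 2) ^ ((d : ℝ) / 2) / 2)) ^ n) /
            ((n : ℝ) * ((n : ℝ) - 1) / 2 ^ d)) /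
          ((2 : ℝ) ^ ((d : ℝ) / 2) * ((n : ℝ) + 1) / (2 * ((n : ℝ) - 1))))
      atTop (nhds 1) ∧
    Tendsto (fun d : ℕ =>
        (1 - ((1 - r ^ d) * (1 - ((n : ℝ) - 1) * (1 - r ^ 2) ^ ((d : ℝ) / 2) / 2)) ^ n) /
          ((n : ℝ) * ((n : ℝ) - 1) / 2 ^ d))
      atTop atTop := by
  have hn1 : (1 : ℝ) < n := by exact_mod_cast hn
  have hr_pos : 0 < r := by rw [hr]; positivity
  have hr_sq : r ^ 2 = 2⁻¹ := by
    rw [hr, div_pow, Real.sq_sqrt zero_le_two]; norm_num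
  have hr_lt : r < 1 := by nlinarith
  have h_layer (d : ℕ) : (1 - r ^ 2) ^ ((d : ℝ) / 2) = r ^ d := by
    rw [show 1 - r ^ 2 = r ^ 2 by linarith, sq_rpow_natCast_div_two hr_pos.le]
  have h_two_pow (d : ℕ) : (2 : ℝ) ^ d = ((r ^ d) ^ 2)⁻¹ := by
    rw [← pow_mul, mul_comm, pow_mul, hr_sq, inv_pow, inv_inv]
  have h_two_rpow (d : ℕ) : (2 : ℝ) ^ ((d : ℝ) / 2) = (r ^ d)⁻¹ := by
    rw [← sq_rpow_natCast_div_two hr_pos.le, hr_sq, Real.inv_rpow zero_le_two, inv_inv]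
  have hx : Tendsto (fun d : ℕ => r ^ d) atTop (𝓝[>] 0) :=
    tendsto_pow_atTop_nhdsWithin_zero_of_lt_one hr_pos hr_lt
  simp only [h_layer, h_two_pow, h_two_rpow]
  have h_ratio : Tendsto (fun d : ℕ =>
      ((1 - ((1 - r ^ d) * (1 - ((n : ℝ) - 1) * r ^ d / 2)) ^ n) /
        ((n : ℝ) * ((n : ℝ) - 1) / ((r ^ d) ^ 2)⁻¹)) /
        ((r ^ d)⁻¹ * ((n : ℝ) + 1) / (2 * ((n : ℝ) - 1)))) atTop (𝓝 1) := by
    have h := ((tendsto_one_sub_pow_one_sub_mul_one_sub_mul_div n (((n : ℝ) - 1) / 2)).comp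
      (hx.mono_right (nhdsGT_le_nhdsNE 0))).mul_const (2 / ((n : ℝ) * ((n : ℝ) + 1)))
    convert h using 2 with d
    · exact failure_quotient_eq_mul_div (by linarith) (pow_pos hr_pos d).ne'
    · field_simp
      ring
  have h_scale : Tendsto (fun d : ℕ => (r ^ d)⁻¹ * ((n : ℝ) + 1) / (2 * ((n : ℝ) - 1)))
      atTop atTop :=
    ((tendsto_inv_nhdsGT_zero.comp hx).atTop_mul_const (by linarith)).atTop_div_const
      (by linarith)
  refine ⟨h_ratio, (h_ratio.pos_mul_atTop one_pos h_scale).congr' ?_⟩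
  filter_upwards [h_scale.eventually_gt_atTop 0] with d hd
  exact div_mul_cancel₀ _ hd.ne'
end
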